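/- arXiv:2504.06756 — 9 statements merged into one kernel-verified Lean document; each statement's English description precedes it below -/
import Mathlib

section
/- Let S be a dense subsemigroup of ((0,∞),+) and v ≥ 1. Then the set 0⁺(Sᵛ) = {p ∈ β(Sᵛ_d) : for all ε > 0, ((0,ε) ∩ S)ᵛ ∈ p} is a compact subsemigroup of the Stone–Čech compactification β(Sᵛ_d) (with the operation induced by coordinatewise addition). -/
open Filter Set

attribute [local instance] Ultrafilter.add Ultrafilter.addSemigroup

/-- `0⁺(Sᵛ)`: ultrafilters on `Sᵛ` (discrete) containing `((0,ε) ∩ S)ᵛ` for every `ε > 0`. -/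
def zeroPlusV (S : AddSubsemigroup ℝ) (v : ℕ) : Set (Ultrafilter (Fin v → S)) :=
  {p | ∀ ε : ℝ, 0 < ε → {f : Fin v → S | ∀ i, 0 < (f i : ℝ) ∧ (f i : ℝ) < ε} ∈ p}

/-- for a dense subsemigroup `S` of `((0,∞),+)` and `v ≥ 1`, the set `0⁺(Sᵛ)`
is a compact (nonempty) subsemigroup of `β(Sᵛ_d)` with coordinatewise addition. -/
theorem zeroPlusV_isCompact_subsemigroup (S : AddSubsemigroup ℝ)
    (hpos : ∀ x ∈ S, (0:ℝ) < x)
    (hdense : ∀ a b : ℝ, 0 < a → a < b → ∃ s ∈ S, a < s ∧ s < b)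
    (v : ℕ) (hv : 1 ≤ v) :
    IsCompact (zeroPlusV S v) ∧ (zeroPlusV S v).Nonempty ∧
      ∀ p ∈ zeroPlusV S v, ∀ q ∈ zeroPlusV S v, p + q ∈ zeroPlusV S v := by
  set A : ℝ → Set (Fin v → S) :=
    fun ε => {f : Fin v → S | ∀ i, 0 < (f i : ℝ) ∧ (f i : ℝ) < ε} with hA
  have hAne : ∀ ε : ℝ, 0 < ε → (A ε).Nonempty := by
    intro ε hε
    obtain ⟨s, hsS, hs1, hs2⟩ := hdense (ε/2) ε (by linarith) (by linarith)
    exact ⟨fun _ => ⟨s, hsS⟩, fun i => ⟨hpos s hsS, hs2⟩⟩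
  refine ⟨?_, ?_, ?_⟩
  · -- compactness: closed subset of a compact space
    have hclosed : IsClosed (zeroPlusV S v) := by
      have : zeroPlusV S v = ⋂ ε ∈ {x : ℝ | 0 < x}, {p : Ultrafilter (Fin v → S) | A ε ∈ p} := by
        ext p; simp [zeroPlusV, Set.mem_iInter]; exact Iff.rfl
      rw [this]
      exact isClosed_biInter fun ε _ => ultrafilter_isClosed_basic (A ε)
    exact hclosed.isCompact
  · -- nonemptiness
    have : Nonempty {x : ℝ // 0 < x} := ⟨⟨1, one_pos⟩⟩
    obtain ⟨s0, hs0, _, _⟩ := hdense 1 2 one_pos one_lt_two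
    have : Nonempty S := ⟨⟨s0, hs0⟩⟩
    have : Nonempty (Fin v → S) := ⟨fun _ => Classical.arbitrary S⟩
    set F : Filter (Fin v → S) := ⨅ ε : {x : ℝ // 0 < x}, 𝓟 (A ε) with hF
    have hdir : Directed (· ≥ ·) fun ε : {x : ℝ // 0 < x} => 𝓟 (A ε) := by
      rintro ⟨ε₁, h1⟩ ⟨ε₂, h2⟩
      refine ⟨⟨min ε₁ ε₂, lt_min h1 h2⟩, ?_, ?_⟩ <;>
        · simp only [ge_iff_le, le_principal_iff, mem_principal]
          intro f hf i
          exact ⟨(hf i).1, lt_of_lt_of_le (hf i).2 (by simp [min_le_left, min_le_right])⟩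
    have hne : F.NeBot := iInf_neBot_of_directed hdir
      (fun ε => principal_neBot_iff.2 (hAne ε ε.2))
    refine ⟨Ultrafilter.of F, fun ε hε => ?_⟩
    exact Ultrafilter.of_le F (mem_iInf_of_mem ⟨ε, hε⟩ (mem_principal_self _))
  · -- closed under addition
    intro p hp q hq ε hε
    have h1 : A (ε/2) ∈ p := hp (ε/2) (by linarith)
    have h2 : A (ε/2) ∈ q := hq (ε/2) (by linarith)
    have : ∀ᶠ f in ↑(p + q), ∀ i, 0 < ((f : Fin v → S) i : ℝ) ∧ ((f : Fin v → S) i : ℝ) < ε := by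
      rw [Ultrafilter.eventually_add]
      filter_upwards [h1] with m hm
      filter_upwards [h2] with m' hm' i
      have e : (((m + m') i : S) : ℝ) = (m i : ℝ) + (m' i : ℝ) := rfl
      constructor
      · rw [e]; linarith [(hm i).1, (hm' i).1]
      · rw [e]; linarith [(hm i).2, (hm' i).2]
    exact this
end

section
/- Let S be a dense subsemigroup of ((0,∞),+). Then 0⁺(S²) ∩ K(β(S²_d)) = ∅, i.e., no ultrafilter in 0⁺(S²) lies in the smallest two-sided ideal of β(S²_d). -/
/-!
Take any `s ∈ S` (one exists as soon as `β(S²_d)` is nonempty). Since `S ⊆ (0, ∞)`, the set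
`A = {f | s ≤ f 0}` absorbs addition on both sides, so the ultrafilters containing `A` form a
two-sided ideal of `β(S²_d)`, nonempty because it contains the principal ultrafilter at `(s, s)`.
Every member of `K(β(S²_d))` therefore contains `A`, while every member of `0⁺(S²)` contains
`((0, s) ∩ S)²`, which is disjoint from `A`.
-/

open Filter Set

attribute [local instance] Ultrafilter.add Ultrafilter.addSemigroup

/-- A (nonempty) two-sided ideal of the semigroup `βγ` of ultrafilters. -/
def IsTwoSidedIdealU (γ : Type*) [AddSemigroup γ] (I : Set (Ultrafilter γ)) : Prop :=
  I.Nonempty ∧ ∀ p ∈ I, ∀ q : Ultrafilter γ, p + q ∈ I ∧ q + p ∈ I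

/-- `K(βγ)`, the smallest two-sided ideal of `βγ` (the intersection of all two-sided ideals,
which coincides with the smallest ideal since `βγ` has one). -/
def smallestIdealU (γ : Type*) [AddSemigroup γ] : Set (Ultrafilter γ) :=
  ⋂₀ {I | IsTwoSidedIdealU γ I}

section IdealOfUltrafilters

variable {γ : Type*} [AddSemigroup γ] {A : Set γ}

theorem isTwoSidedIdealU_setOf_mem (hne : A.Nonempty)
    (hleft : ∀ x ∈ A, ∀ y, x + y ∈ A) (hright : ∀ x, ∀ y ∈ A, x + y ∈ A) :
    IsTwoSidedIdealU γ {q : Ultrafilter γ | A ∈ q} := by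
  obtain ⟨a, ha⟩ := hne
  refine ⟨⟨pure a, Ultrafilter.mem_pure.2 ha⟩, fun p hp q => ⟨?_, ?_⟩⟩
  · exact (Ultrafilter.eventually_add p q (· ∈ A)).2 <|
      Eventually.mono hp fun x hx => Eventually.of_forall fun y => hleft x hx y
  · exact (Ultrafilter.eventually_add q p (· ∈ A)).2 <|
      Eventually.of_forall fun x => Eventually.mono hp fun y hy => hright x y hy

theorem mem_of_mem_smallestIdealU {p : Ultrafilter γ} (hp : p ∈ smallestIdealU γ)
    (hne : A.Nonempty) (hleft : ∀ x ∈ A, ∀ y, x + y ∈ A) (hright : ∀ x, ∀ y ∈ A, x + y ∈ A) :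
    A ∈ p :=
  hp _ (isTwoSidedIdealU_setOf_mem hne hleft hright)

end IdealOfUltrafilters

theorem setOf_le_apply_mem_of_mem_smallestIdealU {S : AddSubsemigroup ℝ}
    (hpos : ∀ x ∈ S, (0 : ℝ) < x) {ι : Type*} (i : ι) (s : S) {p : Ultrafilter (ι → S)}
    (hp : p ∈ smallestIdealU (ι → S)) :
    {f : ι → S | (s : ℝ) ≤ f i} ∈ p := by
  refine mem_of_mem_smallestIdealU hp ⟨fun _ => s, le_refl (s : ℝ)⟩
    (fun x hx y => ?_) fun x y hy => ?_
  · have := hpos _ (y i).2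
    change (s : ℝ) ≤ x i + y i
    linarith [show (s : ℝ) ≤ x i from hx]
  · have := hpos _ (x i).2
    change (s : ℝ) ≤ x i + y i
    linarith [show (s : ℝ) ≤ y i from hy]

theorem zeroPlus2_inter_smallestIdeal_eq_empty_general (S : AddSubsemigroup ℝ)
    (hpos : ∀ x ∈ S, (0:ℝ) < x) :
    zeroPlusV S 2 ∩ smallestIdealU (Fin 2 → S) = ∅ := by
  refine eq_empty_of_forall_notMem fun p ⟨hp, hK⟩ => ?_
  obtain ⟨f, -⟩ := Filter.nonempty_of_mem (univ_mem : univ ∈ p)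
  have hlarge := setOf_le_apply_mem_of_mem_smallestIdealU hpos 0 (f 0) hK
  have hsmall := hp (f 0) (hpos _ (f 0).2)
  obtain ⟨g, hg_large, hg_small⟩ := Filter.nonempty_of_mem (inter_mem hlarge hsmall)
  exact (hg_small 0).2.not_ge hg_large

/-- `0⁺(S²) ∩ K(β(S²_d)) = ∅`. -/
theorem zeroPlus2_inter_smallestIdeal_eq_empty (S : AddSubsemigroup ℝ)
    (hpos : ∀ x ∈ S, (0:ℝ) < x)
    (hdense : ∀ a b : ℝ, 0 < a → a < b → ∃ s ∈ S, a < s ∧ s < b) :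
    zeroPlusV S 2 ∩ smallestIdealU (Fin 2 → S) = ∅ :=
  zeroPlus2_inter_smallestIdeal_eq_empty_general S hpos
end

section
/- Let S be a dense subsemigroup of ((0,∞),+). The set J₀(S²) = {p ∈ 0⁺(S²) : every member of p is a J-set near zero in S²} is a closed subset of 0⁺(S²). -/
open Filter Set

attribute [local instance] Ultrafilter.add Ultrafilter.addSemigroup

/-- `E ⊆ Sᵛ` is a J-set near zero: for every finite family of sequences in `Sᵛ` converging to
zero and every `δ > 0`, there are `a ∈ (S ∩ (0,δ))ᵛ` and a finite nonempty `H ⊆ ℕ` with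
`a + ∑_{t∈H} f(t) ∈ E` for every `f` in the family (finite sums computed in `ℝ` via the
embedding `S ↪ ℝ`). -/
def JSetNearZeroS (S : AddSubsemigroup ℝ) (v : ℕ) (E : Set (Fin v → S)) : Prop :=
  ∀ F : Finset (ℕ → Fin v → S),
    (∀ f ∈ F, ∀ i : Fin v, Tendsto (fun n => ((f n i : ℝ))) atTop (nhds 0)) →
    ∀ δ : ℝ, 0 < δ →
      ∃ a : Fin v → S, (∀ i, 0 < (a i : ℝ) ∧ (a i : ℝ) < δ) ∧
        ∃ H : Finset ℕ, H.Nonempty ∧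
          ∀ f ∈ F, ∃ e ∈ E, ∀ i, (e i : ℝ) = (a i : ℝ) + ∑ t ∈ H, ((f t i : ℝ))

/-- `J₀(Sᵛ)`: the members of `0⁺(Sᵛ)` all of whose members are J-sets near zero. -/
def JZeroV (S : AddSubsemigroup ℝ) (v : ℕ) : Set (Ultrafilter (Fin v → S)) :=
  {p | p ∈ zeroPlusV S v ∧ ∀ A ∈ p, JSetNearZeroS S v A}

theorem Ultrafilter.isClosed_setOf_forall_mem {α : Type*} (P : Set α → Prop) :
    IsClosed {p : Ultrafilter α | ∀ s ∈ p, P s} := by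
  have h : {p : Ultrafilter α | ∀ s ∈ p, P s} =
      ⋂ s ∈ {s | ¬P s}, {p : Ultrafilter α | sᶜ ∈ p} := by
    ext p
    simp only [mem_ofPred_eq, mem_iInter, Ultrafilter.compl_mem_iff_notMem]
    exact forall_congr' fun s => not_imp_not.symm
  rw [h]
  exact isClosed_biInter fun s _ => ultrafilter_isClosed_basic sᶜ

theorem isClosed_JZeroV_in_zeroPlusV (S : AddSubsemigroup ℝ) (v : ℕ) :
    IsClosed {q : zeroPlusV S v | (q : Ultrafilter (Fin v → S)) ∈ JZeroV S v} := by
  have h : {q : zeroPlusV S v | (q : Ultrafilter (Fin v → S)) ∈ JZeroV S v} =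
      Subtype.val ⁻¹' {p | ∀ A ∈ p, JSetNearZeroS S v A} := by
    ext q
    exact and_iff_right q.2
  rw [h]
  exact (Ultrafilter.isClosed_setOf_forall_mem _).preimage continuous_subtype_val

theorem JZero_isClosed_in_zeroPlus_general (S : AddSubsemigroup ℝ) :
    IsClosed {q : zeroPlusV S 2 | (q : Ultrafilter (Fin 2 → S)) ∈ JZeroV S 2} :=
  isClosed_JZeroV_in_zeroPlusV S 2

/-- `J₀(S²)` is a closed subset of `0⁺(S²)` (in the subspace topology). -/
theorem JZero_isClosed_in_zeroPlus (S : AddSubsemigroup ℝ)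
    (hpos : ∀ x ∈ S, (0:ℝ) < x)
    (hdense : ∀ a b : ℝ, 0 < a → a < b → ∃ s ∈ S, a < s ∧ s < b) :
    IsClosed {q : zeroPlusV S 2 | (q : Ultrafilter (Fin 2 → S)) ∈ JZeroV S 2} :=
  JZero_isClosed_in_zeroPlus_general S
end

section
/- Let S be a dense subsemigroup of ((0,∞),+) and let E₁, E₂ ⊆ S². If E₁ ∪ E₂ is a J-set near zero in S², then E₁ is a J-set near zero in S² or E₂ is a J-set near zero in S² (i.e., the property of being a J-set near zero is partition regular). -/
open Filter Set

/-!
Suppose neither `E₁` nor `E₂` is a J-set near zero, witnessed by `(F₁, δ₁)` and `(F₂, δ₂)`, and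
let `F = F₁ ∪ F₂`. Interleave the letters of each word `w : ι → F` along a sparse injection
`ℕ × ι → ℕ` into a single null sequence; the J-set property of `E₁ ∪ E₂` for these finitely many
sequences gives a base point `a` and a set `H`. Colour `w` by whether its witness lies in `E₁`;
the Hales–Jewett theorem gives a monochromatic combinatorial line. Along that line the fixed
coordinates only shift `a` (by little, thanks to sparseness), while the free coordinates sum the
letter `x` over one set `H'`, so `E₁` serves all of `F ⊇ F₁`, or `E₂` all of `F ⊇ F₂`.
-/

open Function Topology Combinatorics

namespace AddSubsemigroup

variable {M : Type*} [AddCommMonoid M] (S : AddSubsemigroup M)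

def withZero : AddSubmonoid M where
  carrier := insert 0 S
  add_mem' := by
    rintro a b (rfl | ha) (rfl | hb)
    exacts [by simp, by simpa using Or.inr hb, by simpa using Or.inr ha, Or.inr (S.add_mem ha hb)]
  zero_mem' := Set.mem_insert _ _

variable {S}

theorem mem_withZero {x : M} : x ∈ S.withZero ↔ x = 0 ∨ x ∈ S := Iff.rfl

theorem add_mem_of_mem_withZero {x y : M} (hx : x ∈ S) (hy : y ∈ S.withZero) : x + y ∈ S := by
  rcases hy with rfl | hy
  exacts [by simpa using hx, S.add_mem hx hy]

end AddSubsemigroup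

theorem Combinatorics.Line.sum_apply {α ι M : Type*} [Fintype ι] [AddCommMonoid M]
    (l : Line α ι) (φ : ι → α → M) (x : α) :
    ∑ j, φ j (l x j) =
      ∑ j, (l.idxFun j).elim 0 (φ j) + ∑ j with l.idxFun j = none, φ j x := by
  classical
  rw [Finset.sum_filter, ← Finset.sum_add_distrib]
  refine Finset.sum_congr rfl fun j _ => ?_
  cases h : l.idxFun j <;> simp [h]

theorem exists_strictMono_forall_lt_of_tendsto_zero {κ : Type*} [Finite κ] {u : κ → ℕ → ℝ}
    (hu : ∀ k, Tendsto (u k) atTop (𝓝 0)) {ε : ℕ → ℝ} (hε : ∀ n, 0 < ε n) :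
    ∃ ψ : ℕ → ℕ, StrictMono ψ ∧ ∀ n k, u k (ψ n) < ε n :=
  extraction_forall_of_eventually fun n =>
    eventually_all.2 fun k => (hu k).eventually_lt_const (hε n)

theorem exists_injective_tendsto_forall_lt {ι κ : Type*} [Countable ι] [Finite κ]
    {u : κ → ℕ → ℝ} (hu : ∀ k, Tendsto (u k) atTop (𝓝 0)) {r : ℝ} (hr : 0 < r) :
    ∃ σ : ℕ × ι → ℕ, Injective σ ∧ (∀ j, Tendsto (fun t => σ (t, j)) atTop atTop) ∧
      ∃ η : ℕ × ι → ℝ, (∀ p, 0 ≤ η p) ∧ (∀ T : Finset (ℕ × ι), ∑ p ∈ T, η p ≤ r) ∧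
        ∀ p k, u k (σ p) < η p := by
  classical
  obtain ⟨c, hc⟩ := exists_injective_nat ι
  set e : ℕ × ι → ℕ := fun p => Nat.pair p.1 (c p.2)
  have he : Injective e := fun p q hpq => by
    obtain ⟨h₁, h₂⟩ := Nat.pair_eq_pair.1 hpq
    exact Prod.ext h₁ (hc h₂)
  set ε : ℕ → ℝ := fun n => r / 2 / 2 ^ n
  have hε : ∀ n, 0 < ε n := fun n => by positivity
  obtain ⟨ψ, hψ, hψu⟩ := exists_strictMono_forall_lt_of_tendsto_zero hu hε
  refine ⟨ψ ∘ e, hψ.injective.comp he, fun j => hψ.tendsto_atTop.comp <|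
    tendsto_atTop_mono (fun t => Nat.left_le_pair t (c j)) tendsto_id, ε ∘ e,
    fun p => (hε (e p)).le, fun T => ?_, fun p => hψu (e p)⟩
  calc ∑ p ∈ T, ε (e p) = ∑ n ∈ T.image e, ε n := (Finset.sum_image he.injOn).symm
    _ ≤ ∑' n, ε n := (summable_geometric_two' r).sum_le_tsum _ fun n _ => by positivity
    _ = r := tsum_geometric_two' r

variable {S : AddSubsemigroup ℝ} {v : ℕ}

def ShiftedSumMem (E : Set (Fin v → S)) (a : Fin v → S) (H : Finset ℕ)
    (f : ℕ → Fin v → S) : Prop :=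
  ∃ e ∈ E, ∀ i, (e i : ℝ) = a i + ∑ t ∈ H, (f t i : ℝ)

section BlockSeq

variable {ι : Type*} [Fintype ι] [Nonempty ι]

def blockSeq (σ : ℕ × ι → ℕ) (w : ι → ℕ → Fin v → S) (t : ℕ) (i : Fin v) : S :=
  ⟨∑ j, (w j (σ (t, j)) i : ℝ), Finset.sum_induction_nonempty _ (· ∈ S)
    (fun _ _ => S.add_mem) Finset.univ_nonempty fun j _ => (w j _ i).2⟩

theorem coe_blockSeq (σ : ℕ × ι → ℕ) (w : ι → ℕ → Fin v → S) (t : ℕ) (i : Fin v) :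
    (blockSeq σ w t i : ℝ) = ∑ j, (w j (σ (t, j)) i : ℝ) := rfl

theorem tendsto_blockSeq {σ : ℕ × ι → ℕ} (hσ : ∀ j, Tendsto (fun t => σ (t, j)) atTop atTop)
    {w : ι → ℕ → Fin v → S} (hw : ∀ j i, Tendsto (fun n => (w j n i : ℝ)) atTop (𝓝 0))
    (i : Fin v) : Tendsto (fun t => (blockSeq σ w t i : ℝ)) atTop (𝓝 0) := by
  simpa [coe_blockSeq] using tendsto_finsetSum Finset.univ fun j _ => (hw j i).comp (hσ j)

/-- The fixed coordinates of `l` only move the base point, by `a' - a`; the free ones sum the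
letter `x` over `H'`. -/
theorem exists_shift_of_line (hpos : ∀ x ∈ S, (0 : ℝ) < x) {F : Finset (ℕ → Fin v → S)}
    {σ : ℕ × ι → ℕ} (hσ : Injective σ) {η : ℕ × ι → ℝ} (hη₀ : ∀ p, 0 ≤ η p)
    (hη : ∀ p, ∀ f ∈ F, ∀ i, (f (σ p) i : ℝ) ≤ η p) (l : Line F ι) (a : Fin v → S)
    {H : Finset ℕ} (hH : H.Nonempty) :
    ∃ a' : Fin v → S, (∀ i, (a i : ℝ) ≤ a' i ∧ (a' i : ℝ) ≤ a i + ∑ p ∈ H ×ˢ Finset.univ, η p) ∧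
      ∃ H' : Finset ℕ, H'.Nonempty ∧ ∀ x i,
        (a i : ℝ) + ∑ t ∈ H, (blockSeq σ (fun j => (l x j : ℕ → Fin v → S)) t i : ℝ) =
          a' i + ∑ s ∈ H', ((x : ℕ → Fin v → S) s i : ℝ) := by
  classical
  set c : Fin v → ℝ := fun i =>
    ∑ t ∈ H, ∑ j, (l.idxFun j).elim 0 fun u => ((u : ℕ → Fin v → S) (σ (t, j)) i : ℝ)
  have hc_mem : ∀ i, c i ∈ S.withZero := fun i =>
    sum_mem fun t _ => sum_mem fun j _ => by
      cases l.idxFun j <;> simp [AddSubsemigroup.mem_withZero]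
  have hc_nonneg : ∀ i, 0 ≤ c i := fun i =>
    Finset.sum_nonneg fun t _ => Finset.sum_nonneg fun j _ => by
      cases l.idxFun j <;> simp [(hpos _ (Subtype.prop _)).le]
  have hc_le : ∀ i, c i ≤ ∑ p ∈ H ×ˢ Finset.univ, η p := fun i => by
    rw [Finset.sum_product]
    exact Finset.sum_le_sum fun t _ => Finset.sum_le_sum fun j _ => by
      cases l.idxFun j <;> simp [hη₀, hη _ _ (Subtype.prop _)]
  obtain ⟨j₀, hj₀⟩ := l.proper
  refine ⟨fun i => ⟨a i + c i, AddSubsemigroup.add_mem_of_mem_withZero (a i).2 (hc_mem i)⟩,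
    fun i => ⟨by simpa using hc_nonneg i, by simpa using hc_le i⟩,
    (H ×ˢ Finset.univ.filter (l.idxFun · = none)).image σ,
    (hH.product ⟨j₀, by simpa using hj₀⟩).image σ,
    fun x i => ?_⟩
  rw [Finset.sum_image hσ.injOn, Finset.sum_product]
  simp only [coe_blockSeq, c, add_assoc, ← Finset.sum_add_distrib]
  congr 1
  exact Finset.sum_congr rfl fun t _ =>
    l.sum_apply (fun j u => ((u : ℕ → Fin v → S) (σ (t, j)) i : ℝ)) x

end BlockSeq

theorem JSetNearZeroS.exists_mono (hpos : ∀ x ∈ S, (0 : ℝ) < x) {E₁ E₂ : Set (Fin v → S)}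
    (h : JSetNearZeroS S v (E₁ ∪ E₂)) (F : Finset (ℕ → Fin v → S))
    (hF : ∀ f ∈ F, ∀ i, Tendsto (fun n => (f n i : ℝ)) atTop (𝓝 0)) {δ : ℝ} (hδ : 0 < δ) :
    ∃ a : Fin v → S, (∀ i, 0 < (a i : ℝ) ∧ (a i : ℝ) < δ) ∧ ∃ H : Finset ℕ, H.Nonempty ∧
      ((∀ f ∈ F, ShiftedSumMem E₁ a H f) ∨ ∀ f ∈ F, ShiftedSumMem E₂ a H f) := by
  classical
  obtain ⟨ι, _, hHJ⟩ := Line.exists_mono_in_high_dimension F Bool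
  have : Nonempty ι := ⟨(hHJ fun _ => true).choose.proper.choose⟩
  obtain ⟨σ, hσ, hσ_tendsto, η, hη₀, hη_sum, hη⟩ :=
    exists_injective_tendsto_forall_lt (ι := ι) (u := fun (p : F × Fin v) n => (p.1.1 n p.2 : ℝ))
      (fun p => hF _ p.1.2 p.2) (half_pos hδ)
  set g : (ι → F) → ℕ → Fin v → S := fun w => blockSeq σ fun j => w j
  have hg : ∀ f ∈ Finset.univ.image g, ∀ i, Tendsto (fun n => (f n i : ℝ)) atTop (𝓝 0) := by
    simp only [Finset.mem_image, Finset.mem_univ, true_and]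
    rintro _ ⟨w, rfl⟩ i
    exact tendsto_blockSeq hσ_tendsto (fun j => hF _ (w j).2) i
  obtain ⟨a, ha, H, hH, hmem⟩ := h _ hg (δ / 2) (half_pos hδ)
  obtain ⟨l, col, hcol⟩ := hHJ fun w => decide (ShiftedSumMem E₁ a H (g w))
  obtain ⟨a', ha', H', hH', hshift⟩ := exists_shift_of_line hpos hσ hη₀
    (fun p f hf i => (hη p (⟨f, hf⟩, i)).le) l a hH
  refine ⟨a', fun i => ⟨(ha i).1.trans_le (ha' i).1, ?_⟩, H', hH', ?_⟩
  · linarith [(ha i).2, (ha' i).2, hη_sum (H ×ˢ Finset.univ)]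
  have hline : ∀ x : F, ∀ E, ShiftedSumMem E a H (g (l x)) → ShiftedSumMem E a' H' x :=
    fun x E ⟨e, he, heq⟩ => ⟨e, he, fun i => (heq i).trans (hshift x i)⟩
  cases col
  · refine Or.inr fun f hf => hline ⟨f, hf⟩ E₂ ?_
    obtain ⟨e, he, heq⟩ := hmem _ (Finset.mem_image_of_mem g (Finset.mem_univ (l ⟨f, hf⟩)))
    have hE₁ : ¬ ShiftedSumMem E₁ a H (g (l ⟨f, hf⟩)) := by simpa using hcol ⟨f, hf⟩
    exact ⟨e, he.resolve_left fun he₁ => hE₁ ⟨e, he₁, heq⟩, heq⟩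
  · exact Or.inl fun f hf => hline ⟨f, hf⟩ E₁ (by simpa using hcol ⟨f, hf⟩)

theorem JSetNearZeroS.or_of_union (hpos : ∀ x ∈ S, (0 : ℝ) < x) {E₁ E₂ : Set (Fin v → S)}
    (h : JSetNearZeroS S v (E₁ ∪ E₂)) : JSetNearZeroS S v E₁ ∨ JSetNearZeroS S v E₂ := by
  classical
  by_contra hnot
  obtain ⟨h₁, h₂⟩ := not_or.1 hnot
  simp only [JSetNearZeroS, not_forall] at h₁ h₂
  obtain ⟨F₁, hF₁, δ₁, hδ₁, hbad₁⟩ := h₁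
  obtain ⟨F₂, hF₂, δ₂, hδ₂, hbad₂⟩ := h₂
  obtain ⟨a, ha, H, hH, hE₁ | hE₂⟩ := h.exists_mono hpos (F₁ ∪ F₂)
    (fun f hf => (Finset.mem_union.1 hf).elim (hF₁ f) (hF₂ f)) (lt_min hδ₁ hδ₂)
  · exact hbad₁ ⟨a, fun i => ⟨(ha i).1, (ha i).2.trans_le (min_le_left _ _)⟩, H, hH,
      fun f hf => hE₁ f (Finset.mem_union_left _ hf)⟩
  · exact hbad₂ ⟨a, fun i => ⟨(ha i).1, (ha i).2.trans_le (min_le_right _ _)⟩, H, hH,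
      fun f hf => hE₂ f (Finset.mem_union_right _ hf)⟩

theorem jSetNearZero_partition_regular_general (S : AddSubsemigroup ℝ)
    (hpos : ∀ x ∈ S, (0:ℝ) < x)
    (E₁ E₂ : Set (Fin 2 → S)) (h : JSetNearZeroS S 2 (E₁ ∪ E₂)) :
    JSetNearZeroS S 2 E₁ ∨ JSetNearZeroS S 2 E₂ :=
  h.or_of_union hpos

/-- being a J-set near zero in `S²` is partition regular. -/
theorem jSetNearZero_partition_regular (S : AddSubsemigroup ℝ)
    (hpos : ∀ x ∈ S, (0:ℝ) < x)
    (hdense : ∀ a b : ℝ, 0 < a → a < b → ∃ s ∈ S, a < s ∧ s < b)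
    (E₁ E₂ : Set (Fin 2 → S)) (h : JSetNearZeroS S 2 (E₁ ∪ E₂)) :
    JSetNearZeroS S 2 E₁ ∨ JSetNearZeroS S 2 E₂ :=
  jSetNearZero_partition_regular_general S hpos E₁ E₂ h
end

section
/- Let S be a dense subsemigroup of ((0,∞),+) and E ⊆ S². Then the closure of E in β(S²_d) meets J₀(S²) if and only if E is a J-set near zero in S². -/
open Filter Set

attribute [local instance] Ultrafilter.add Ultrafilter.addSemigroup

namespace JAux

variable {S : AddSubsemigroup ℝ} {v : ℕ}

def small (S : AddSubsemigroup ℝ) (v : ℕ) (ε : ℝ) : Set (Fin v → S) :=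
  {f : Fin v → S | ∀ i, 0 < (f i : ℝ) ∧ (f i : ℝ) < ε}

lemma geom_bound (K : Finset ℕ) : ∑ s ∈ K, ((1:ℝ)/2)^s ≤ 2 := by
  calc ∑ s ∈ K, ((1:ℝ)/2)^s ≤ ∑ s ∈ Finset.range (K.sup id).succ, ((1:ℝ)/2)^s := by
        apply Finset.sum_le_sum_of_subset_of_nonneg K.subset_range_sup_succ
        intro i _ _; positivity
    _ ≤ 2 := sum_geometric_two_le _

lemma add_sum_mem {β : Type*} (T : Finset β) (g : β → ℝ) :
    ∀ x ∈ S, (∀ b ∈ T, g b ∈ S) → x + ∑ b ∈ T, g b ∈ S := by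
  classical
  induction T using Finset.cons_induction with
  | empty => intro x hx _; simpa using hx
  | cons a T ha ih =>
      intro x hx hg
      rw [Finset.sum_cons, ← add_assoc]
      exact ih _ (S.add_mem hx (hg a (Finset.mem_cons_self a T)))
        (fun b hb => hg b (Finset.mem_cons_of_mem hb))

lemma sum_mem' {β : Type*} {T : Finset β} (hT : T.Nonempty) (g : β → ℝ)
    (hg : ∀ b ∈ T, g b ∈ S) : ∑ b ∈ T, g b ∈ S := by
  classical
  obtain ⟨b0, hb0⟩ := hT
  rw [← Finset.add_sum_erase _ _ hb0]
  exact add_sum_mem _ _ _ (hg b0 hb0) (fun b hb => hg b (Finset.mem_of_mem_erase hb))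

lemma exists_null_seq (S : AddSubsemigroup ℝ) (v : ℕ)
    (hdense : ∀ a b : ℝ, 0 < a → a < b → ∃ s ∈ S, a < s ∧ s < b) :
    ∃ f : ℕ → Fin v → S, ∀ i : Fin v, Tendsto (fun n => ((f n i : ℝ))) atTop (nhds 0) := by
  have h : ∀ n : ℕ, ∃ s : ℝ, s ∈ S ∧ 1/(n+2:ℝ) < s ∧ s < 1/(n+1:ℝ) := by
    intro n
    have h1 : (0:ℝ) < 1/(n+2:ℝ) := by positivity
    have h2 : 1/(n+2:ℝ) < 1/(n+1:ℝ) := by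
      apply one_div_lt_one_div_of_lt
      · positivity
      · norm_num
    obtain ⟨s, hs, h3, h4⟩ := hdense _ _ h1 h2
    exact ⟨s, hs, h3, h4⟩
  choose s hsS hs1 hs2 using h
  refine ⟨fun n _ => ⟨s n, hsS n⟩, fun i => ?_⟩
  have h0 : ∀ n : ℕ, (0:ℝ) ≤ s n := fun n => le_of_lt (lt_trans (by positivity) (hs1 n))
  apply squeeze_zero h0 (fun n => le_of_lt (hs2 n))
  exact tendsto_one_div_add_atTop_nhds_zero_nat

lemma exists_small_elt (S : AddSubsemigroup ℝ) (v : ℕ)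
    (hdense : ∀ a b : ℝ, 0 < a → a < b → ∃ s ∈ S, a < s ∧ s < b) {δ : ℝ} (hδ : 0 < δ) :
    ∃ a : Fin v → S, ∀ i, 0 < (a i : ℝ) ∧ (a i : ℝ) < δ := by
  obtain ⟨s, hs, h1, h2⟩ := hdense (δ/2) δ (by positivity) (by linarith)
  exact ⟨fun _ => ⟨s, hs⟩, fun i => ⟨by dsimp; linarith, h2⟩⟩

lemma exists_extraction (F : Finset (ℕ → Fin v → S))
    (hF : ∀ f ∈ F, ∀ i : Fin v, Tendsto (fun n => ((f n i : ℝ))) atTop (nhds 0))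
    (c : ℕ → ℝ) (hc : ∀ s, 0 < c s) :
    ∃ σ : ℕ → ℕ, StrictMono σ ∧ ∀ s, ∀ f ∈ F, ∀ i, ((f (σ s) i : ℝ)) < c s := by
  have h : ∀ s : ℕ, ∃ N, ∀ n, N ≤ n → ∀ f ∈ F, ∀ i, ((f n i:ℝ)) < c s := by
    intro s
    have hev : ∀ᶠ n in atTop, ∀ f ∈ F, ∀ i, ((f n i:ℝ)) < c s := by
      rw [eventually_all_finset]
      intro f hf
      rw [eventually_all]
      intro i
      exact (hF f hf i).eventually (Filter.Tendsto.eventually_lt_const (hc s) tendsto_id)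
    rw [eventually_atTop] at hev
    exact hev
  choose N hN using h
  set σ : ℕ → ℕ := fun s => Nat.rec (N 0) (fun s ih => max (N (s+1)) (ih+1)) s with hσ
  have hmono : StrictMono σ :=
    strictMono_nat_of_lt_succ (fun n => lt_of_lt_of_le (Nat.lt_succ_self _) (le_max_right _ _))
  have hge : ∀ s, N s ≤ σ s := by
    intro s
    cases s with
    | zero => exact le_refl _
    | succ s => exact le_max_left _ _
  exact ⟨σ, hmono, fun s f hf i => hN s (σ s) (hge s) f hf i⟩


lemma jset_inter_small (hpos : ∀ x ∈ S, (0:ℝ) < x) {E : Set (Fin v → S)}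
    (hE : JSetNearZeroS S v E) {ε : ℝ} (hε : 0 < ε) :
    JSetNearZeroS S v (E ∩ small S v ε) := by
  classical
  intro F hF δ hδ
  obtain ⟨σ, hσm, hσ⟩ := exists_extraction F hF (fun s => ε/8 * (1/2)^s) (fun s => by positivity)
  set F' : Finset (ℕ → Fin v → S) := F.image (fun f => fun t => f (σ t)) with hF'
  have hF't : ∀ f ∈ F', ∀ i : Fin v, Tendsto (fun n => ((f n i : ℝ))) atTop (nhds 0) := by
    intro f hf i
    rw [hF', Finset.mem_image] at hf
    obtain ⟨g, hg, rfl⟩ := hf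
    exact (hF g hg i).comp hσm.tendsto_atTop
  obtain ⟨a, ha, H, hHne, hwit⟩ := hE F' hF't (min δ (ε/2)) (lt_min hδ (by positivity))
  refine ⟨a, fun i => ⟨(ha i).1, lt_of_lt_of_le (ha i).2 (min_le_left _ _)⟩,
    H.image σ, hHne.image σ, ?_⟩
  intro f hf
  obtain ⟨e, heE, heq⟩ := hwit (fun t => f (σ t))
    (by rw [hF']; exact Finset.mem_image_of_mem _ hf)
  have hsum : ∀ i : Fin v, ∑ t ∈ H.image σ, ((f t i : ℝ)) = ∑ t ∈ H, ((f (σ t) i : ℝ)) := by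
    intro i
    rw [Finset.sum_image (fun x _ y _ h => hσm.injective h)]
  refine ⟨e, ⟨heE, ?_⟩, fun i => by rw [hsum i, heq i]⟩
  intro i
  have hnn : (0:ℝ) ≤ ∑ t ∈ H, ((f (σ t) i : ℝ)) :=
    Finset.sum_nonneg (fun t _ => le_of_lt (hpos _ (f (σ t) i).2))
  have h1 : (a i : ℝ) < ε/2 := lt_of_lt_of_le (ha i).2 (min_le_right _ _)
  have h2 : ∑ t ∈ H, ((f (σ t) i : ℝ)) ≤ ∑ t ∈ H, ε/8 * (1/2:ℝ)^t :=
    Finset.sum_le_sum (fun t _ => le_of_lt (hσ t f hf i))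
  have h3 : ∑ t ∈ H, ε/8 * (1/2:ℝ)^t ≤ ε/8 * 2 := by
    rw [← Finset.mul_sum]
    exact mul_le_mul_of_nonneg_left (geom_bound H) (by positivity)
  constructor
  · rw [heq i]; linarith [(ha i).1]
  · rw [heq i]; linarith


lemma jset_partition
    (hpos : ∀ x ∈ S, (0:ℝ) < x)
    (hdense : ∀ a b : ℝ, 0 < a → a < b → ∃ s ∈ S, a < s ∧ s < b)
    {A : Set (Fin v → S)} (hA : JSetNearZeroS S v A)
    (𝔅 : Finset (Set (Fin v → S))) (hcov : A ⊆ ⋃ B ∈ 𝔅, B) :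
    ∃ B ∈ 𝔅, JSetNearZeroS S v B := by
  classical
  by_contra hcon
  push_neg at hcon
  obtain ⟨f₀, hf₀⟩ := exists_null_seq S v hdense
  -- A is nonempty
  obtain ⟨a₀, -, H₀, -, hw₀⟩ := hA {f₀}
    (by intro f hf i; rw [Finset.mem_singleton] at hf; subst hf; exact hf₀ i) 1 one_pos
  obtain ⟨eA, heA, -⟩ := hw₀ f₀ (Finset.mem_singleton_self f₀)
  have h𝔅ne : 𝔅.Nonempty := by
    have := hcov heA
    simp only [Set.mem_iUnion] at this
    obtain ⟨B, hB, -⟩ := this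
    exact ⟨B, hB⟩
  -- failure data for each cell
  have hfail : ∀ B : {B // B ∈ 𝔅}, ∃ F : Finset (ℕ → Fin v → S),
      (∀ f ∈ F, ∀ i : Fin v, Tendsto (fun n => ((f n i : ℝ))) atTop (nhds 0)) ∧
      ∃ δ : ℝ, 0 < δ ∧
        ¬ ∃ a : Fin v → S, (∀ i, 0 < (a i : ℝ) ∧ (a i : ℝ) < δ) ∧
          ∃ H : Finset ℕ, H.Nonempty ∧
            ∀ f ∈ F, ∃ e ∈ B.1, ∀ i, (e i : ℝ) = (a i : ℝ) + ∑ t ∈ H, ((f t i : ℝ)) := by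
    intro B
    have h := hcon B.1 B.2
    rw [JSetNearZeroS, not_forall] at h
    obtain ⟨F, hF⟩ := h
    rw [_root_.not_imp] at hF
    obtain ⟨hP, h2⟩ := hF
    rw [not_forall] at h2
    obtain ⟨δ, h3⟩ := h2
    rw [_root_.not_imp] at h3
    exact ⟨F, hP, δ, h3.1, h3.2⟩
  choose Fb hFb δb hδb hfailb using hfail
  have hattne : 𝔅.attach.Nonempty := by
    obtain ⟨B, hB⟩ := h𝔅ne; exact ⟨⟨B, hB⟩, Finset.mem_attach _ _⟩
  set δ₀ : ℝ := 𝔅.attach.inf' hattne δb with hδ₀def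
  have hδ₀pos : 0 < δ₀ := by
    rw [hδ₀def, Finset.lt_inf'_iff]
    exact fun B _ => hδb B
  have hδ₀le : ∀ B : {B // B ∈ 𝔅}, δ₀ ≤ δb B :=
    fun B => Finset.inf'_le _ (Finset.mem_attach _ B)
  -- the combined family of sequences
  set F' : Finset (ℕ → Fin v → S) := insert f₀ (𝔅.attach.biUnion Fb) with hF'def
  have hf₀F' : f₀ ∈ F' := Finset.mem_insert_self _ _
  have hF't : ∀ f ∈ F', ∀ i : Fin v, Tendsto (fun n => ((f n i : ℝ))) atTop (nhds 0) := by
    intro f hf i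
    rw [hF'def, Finset.mem_insert] at hf
    rcases hf with rfl | hf
    · exact hf₀ i
    · obtain ⟨B, -, hfB⟩ := Finset.mem_biUnion.mp hf
      exact hFb B f hfB i
  haveI hαne : Nonempty {f // f ∈ F'} := ⟨⟨f₀, hf₀F'⟩⟩
  haveI hκne : Nonempty {B // B ∈ 𝔅} := ⟨⟨h𝔅ne.choose, h𝔅ne.choose_spec⟩⟩
  -- Hales-Jewett
  obtain ⟨ι, ιfin, hHJ⟩ :=
    Combinatorics.Line.exists_mono_in_high_dimension {f // f ∈ F'} {B // B ∈ 𝔅}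
  haveI := ιfin
  haveI hιne : Nonempty ι := by
    obtain ⟨l, -⟩ := hHJ (fun _ => Classical.arbitrary _)
    obtain ⟨j, -⟩ := l.proper
    exact ⟨j⟩
  set n : ℕ := Fintype.card ι with hn_def
  have hn : 0 < n := Fintype.card_pos
  set en : ι ≃ Fin n := Fintype.equivFin ι with hen
  -- extraction
  obtain ⟨σ, hσm, hσ⟩ := exists_extraction F' hF't (fun s => δ₀/8 * (1/2)^s) (fun s => by positivity)
  -- the sequences g_w
  have hgmem : ∀ (w : ι → {f // f ∈ F'}) (t : ℕ) (j' : Fin v),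
      ∑ j : ι, (((w j).1 (σ (n * t + (en j : ℕ))) j' : ℝ)) ∈ S := by
    intro w t j'
    exact sum_mem' Finset.univ_nonempty _ (fun j _ => ((w j).1 (σ (n * t + (en j : ℕ))) j').2)
  set g : (ι → {f // f ∈ F'}) → ℕ → Fin v → S :=
    fun w t j' => ⟨∑ j : ι, (((w j).1 (σ (n * t + (en j : ℕ))) j' : ℝ)), hgmem w t j'⟩ with hgdef
  have hgval : ∀ w t j', ((g w t j' : ℝ)) = ∑ j : ι, (((w j).1 (σ (n * t + (en j : ℕ))) j' : ℝ)) :=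
    fun w t j' => rfl
  have hterm_lt : ∀ (x : {f // f ∈ F'}) (s : ℕ) (j' : Fin v),
      ((x.1 (σ s) j' : ℝ)) < δ₀/8 * (1/2)^s := fun x s j' => hσ s x.1 x.2 j'
  have hpow_le : ∀ (t : ℕ) (j : ι), ((1:ℝ)/2)^(n * t + (en j : ℕ)) ≤ ((1:ℝ)/2)^t := by
    intro t j
    apply pow_le_pow_of_le_one (by norm_num) (by norm_num)
    calc t ≤ n * t := Nat.le_mul_of_pos_left t hn
      _ ≤ n * t + (en j : ℕ) := Nat.le_add_right _ _
  have htd : ∀ w (j' : Fin v), Tendsto (fun t => ((g w t j' : ℝ))) atTop (nhds 0) := by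
    intro w j'
    have hub : ∀ t, ((g w t j' : ℝ)) ≤ (n : ℝ) * (δ₀/8 * (1/2)^t) := by
      intro t
      rw [hgval]
      calc ∑ j : ι, (((w j).1 (σ (n * t + (en j : ℕ))) j' : ℝ))
          ≤ ∑ _j : ι, δ₀/8 * ((1:ℝ)/2)^t := by
            apply Finset.sum_le_sum
            intro j _
            refine le_trans (le_of_lt (hterm_lt _ _ _)) ?_
            exact mul_le_mul_of_nonneg_left (hpow_le t j) (by positivity)
        _ = (n : ℝ) * (δ₀/8 * (1/2)^t) := by
            rw [Finset.sum_const, Finset.card_univ, nsmul_eq_mul, hn_def]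
    have hlb : ∀ t, (0:ℝ) ≤ ((g w t j' : ℝ)) := fun t => le_of_lt (hpos _ (g w t j').2)
    apply squeeze_zero hlb hub
    have h2 : Tendsto (fun t : ℕ => ((1:ℝ)/2)^t) atTop (nhds 0) :=
      tendsto_pow_atTop_nhds_zero_of_lt_one (by norm_num) (by norm_num)
    have := ((h2.const_mul (δ₀/8)).const_mul (n:ℝ))
    simpa using this
  -- apply the J-set property of A
  obtain ⟨a, ha, H, hHne, hwit⟩ := hA (Finset.image g Finset.univ)
    (by
      intro gg hg j'
      obtain ⟨w, -, rfl⟩ := Finset.mem_image.mp hg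
      exact htd w j')
    (δ₀/2) (by positivity)
  have hex : ∀ w : ι → {f // f ∈ F'}, ∃ e ∈ A, ∀ j' : Fin v,
      ((e j' : ℝ)) = (a j' : ℝ) + ∑ t ∈ H, ((g w t j' : ℝ)) :=
    fun w => hwit (g w) (Finset.mem_image_of_mem _ (Finset.mem_univ w))
  choose e heA heq using hex
  have hcol : ∀ w, ∃ B : {B // B ∈ 𝔅}, e w ∈ B.1 := by
    intro w
    have := hcov (heA w)
    simp only [Set.mem_iUnion] at this
    obtain ⟨B, hB, hmem⟩ := this
    exact ⟨⟨B, hB⟩, hmem⟩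
  choose C hC using hcol
  obtain ⟨l, c, hl⟩ := hHJ C
  -- variable and fixed positions
  set Vf : Finset ι := Finset.univ.filter (fun j => l.idxFun j = none) with hVfdef
  set T : Finset ι := Finset.univ.filter (fun j => ¬ l.idxFun j = none) with hTdef
  have hVfne : Vf.Nonempty := by
    obtain ⟨j, hj⟩ := l.proper
    exact ⟨j, by rw [hVfdef]; simp [hj]⟩
  set L : ι → {f // f ∈ F'} := fun j => (l.idxFun j).getD (Classical.arbitrary _) with hLdef
  -- injectivity of the encoding
  have hencN : ∀ p1 p2 : ι × ℕ, n * p1.2 + (en p1.1 : ℕ) = n * p2.2 + (en p2.1 : ℕ) → p1 = p2 := by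
    intro p1 p2 h1
    have h2 : ((en p1.1 : ℕ)) < n := (en p1.1).isLt
    have h3 : ((en p2.1 : ℕ)) < n := (en p2.1).isLt
    have ht : p1.2 = p2.2 := by
      have e1 : (n * p1.2 + ((en p1.1 : ℕ))) / n = p1.2 := by
        rw [Nat.mul_add_div hn, Nat.div_eq_of_lt h2, Nat.add_zero]
      have e2 : (n * p2.2 + ((en p2.1 : ℕ))) / n = p2.2 := by
        rw [Nat.mul_add_div hn, Nat.div_eq_of_lt h3, Nat.add_zero]
      rw [← e1, ← e2, h1]
    have hv : ((en p1.1 : ℕ)) = ((en p2.1 : ℕ)) := by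
      rw [ht] at h1
      exact Nat.add_left_cancel h1
    have hj : p1.1 = p2.1 := en.injective (Fin.val_injective hv)
    exact Prod.ext hj ht
  set Hstar : Finset ℕ :=
    (Vf ×ˢ H).image (fun p : ι × ℕ => σ (n * p.2 + (en p.1 : ℕ))) with hHstardef
  have hHstarne : Hstar.Nonempty := (hVfne.product hHne).image _
  -- a*
  have haS : ∀ j' : Fin v,
      (a j' : ℝ) + ∑ j ∈ T, ∑ t ∈ H, (((L j).1 (σ (n * t + (en j : ℕ))) j' : ℝ)) ∈ S := by
    intro j'
    apply add_sum_mem _ _ _ (a j').2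
    intro j _
    exact sum_mem' hHne _ (fun t _ => ((L j).1 (σ (n * t + (en j : ℕ))) j').2)
  set astar : Fin v → S := fun j' => ⟨_, haS j'⟩ with hastardef
  have hastarval : ∀ j', ((astar j' : ℝ)) =
      (a j' : ℝ) + ∑ j ∈ T, ∑ t ∈ H, (((L j).1 (σ (n * t + (en j : ℕ))) j' : ℝ)) :=
    fun j' => rfl
  -- bound on the correction term
  have hbound : ∀ j' : Fin v,
      ∑ j ∈ T, ∑ t ∈ H, (((L j).1 (σ (n * t + (en j : ℕ))) j' : ℝ)) ≤ δ₀/4 := by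
    intro j'
    have h1 : ∑ j ∈ T, ∑ t ∈ H, (((L j).1 (σ (n * t + (en j : ℕ))) j' : ℝ))
        ≤ ∑ j ∈ T, ∑ t ∈ H, δ₀/8 * ((1:ℝ)/2)^(n * t + (en j : ℕ)) :=
      Finset.sum_le_sum (fun j _ => Finset.sum_le_sum (fun t _ => le_of_lt (hterm_lt _ _ _)))
    have h2 : ∑ j ∈ T, ∑ t ∈ H, (δ₀/8 * ((1:ℝ)/2)^(n * t + (en j : ℕ)))
        = ∑ p ∈ T ×ˢ H, δ₀/8 * ((1:ℝ)/2)^(n * p.2 + (en p.1 : ℕ)) := by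
      rw [Finset.sum_product]
    have h3 : ∑ p ∈ T ×ˢ H, δ₀/8 * ((1:ℝ)/2)^(n * p.2 + (en p.1 : ℕ))
        = δ₀/8 * ∑ s ∈ (T ×ˢ H).image (fun p : ι × ℕ => n * p.2 + (en p.1 : ℕ)), ((1:ℝ)/2)^s := by
      rw [Finset.sum_image (fun p1 _ p2 _ h => hencN p1 p2 h), Finset.mul_sum]
    have h4 := geom_bound ((T ×ˢ H).image (fun p : ι × ℕ => n * p.2 + (en p.1 : ℕ)))
    have h5 : δ₀/8 * ∑ s ∈ (T ×ˢ H).image (fun p : ι × ℕ => n * p.2 + (en p.1 : ℕ)), ((1:ℝ)/2)^s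
        ≤ δ₀/8 * 2 := mul_le_mul_of_nonneg_left h4 (by positivity)
    calc ∑ j ∈ T, ∑ t ∈ H, (((L j).1 (σ (n * t + (en j : ℕ))) j' : ℝ))
        ≤ ∑ p ∈ T ×ˢ H, δ₀/8 * ((1:ℝ)/2)^(n * p.2 + (en p.1 : ℕ)) := by rw [← h2]; exact h1
      _ ≤ δ₀/8 * 2 := by rw [h3]; exact h5
      _ = δ₀/4 := by ring
  have hbound0 : ∀ j' : Fin v,
      (0:ℝ) ≤ ∑ j ∈ T, ∑ t ∈ H, (((L j).1 (σ (n * t + (en j : ℕ))) j' : ℝ)) := by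
    intro j'
    apply Finset.sum_nonneg
    intro j _
    exact Finset.sum_nonneg (fun t _ => le_of_lt (hpos _ ((L j).1 (σ (n * t + (en j : ℕ))) j').2))
  -- key computation
  have hkey : ∀ (x : {f // f ∈ F'}) (j' : Fin v),
      ((e (l x) j' : ℝ)) = ((astar j' : ℝ)) + ∑ s ∈ Hstar, ((x.1 s j' : ℝ)) := by
    intro x j'
    rw [heq (l x) j', hastarval j']
    have hsplit : ∀ t : ℕ, ((g (l x) t j' : ℝ)) =
        (∑ j ∈ Vf, ((x.1 (σ (n * t + (en j : ℕ))) j' : ℝ)))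
        + ∑ j ∈ T, (((L j).1 (σ (n * t + (en j : ℕ))) j' : ℝ)) := by
      intro t
      rw [hgval]
      rw [← Finset.sum_filter_add_sum_filter_not Finset.univ (fun j => l.idxFun j = none)]
      congr 1
      · apply Finset.sum_congr rfl
        intro j hj
        have hjn : l.idxFun j = none := (Finset.mem_filter.mp hj).2
        simp only [Combinatorics.Line.coe_apply, hjn, Option.getD_none]
      · apply Finset.sum_congr rfl
        intro j hj
        obtain ⟨i, hi⟩ := Option.ne_none_iff_exists'.mp (Finset.mem_filter.mp hj).2
        simp only [Combinatorics.Line.coe_apply, hLdef, hi, Option.getD_some]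
    have hS1 : ∑ t ∈ H, ((g (l x) t j' : ℝ))
        = (∑ t ∈ H, ∑ j ∈ Vf, ((x.1 (σ (n * t + (en j : ℕ))) j' : ℝ)))
          + ∑ t ∈ H, ∑ j ∈ T, (((L j).1 (σ (n * t + (en j : ℕ))) j' : ℝ)) := by
      rw [← Finset.sum_add_distrib]
      exact Finset.sum_congr rfl (fun t _ => hsplit t)
    have hS2 : ∑ t ∈ H, ∑ j ∈ Vf, ((x.1 (σ (n * t + (en j : ℕ))) j' : ℝ))
        = ∑ s ∈ Hstar, ((x.1 s j' : ℝ)) := by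
      rw [hHstardef]
      rw [Finset.sum_image (fun p1 _ p2 _ h => hencN p1 p2 (hσm.injective h))]
      rw [Finset.sum_product]
      exact Finset.sum_comm
    have hS3 : ∑ t ∈ H, ∑ j ∈ T, (((L j).1 (σ (n * t + (en j : ℕ))) j' : ℝ))
        = ∑ j ∈ T, ∑ t ∈ H, (((L j).1 (σ (n * t + (en j : ℕ))) j' : ℝ)) := Finset.sum_comm
    rw [hS1, hS2, hS3]
    ring
  -- derive the contradiction
  apply hfailb c
  refine ⟨astar, ?_, Hstar, hHstarne, ?_⟩
  · intro j'
    constructor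
    · rw [hastarval j']
      have := (ha j').1
      linarith [hbound0 j']
    · rw [hastarval j']
      have h1 := (ha j').2
      have h2 := hbound j'
      have h3 := hδ₀le c
      linarith
  · intro f hf
    have hfF' : f ∈ F' := by
      rw [hF'def]
      exact Finset.mem_insert_of_mem (Finset.mem_biUnion.mpr ⟨c, Finset.mem_attach _ _, hf⟩)
    refine ⟨e (l ⟨f, hfF'⟩), ?_, hkey ⟨f, hfF'⟩⟩
    have h := hC (l ⟨f, hfF'⟩)
    rw [hl ⟨f, hfF'⟩] at h
    exact h

end JAux

/-- the closure of `E` in `β(S²_d)` (i.e. `{p : E ∈ p}`) meets `J₀(S²)` iff `E` is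
a J-set near zero in `S²`. -/
theorem closure_meets_JZero_iff_jSetNearZero (S : AddSubsemigroup ℝ)
    (hpos : ∀ x ∈ S, (0:ℝ) < x)
    (hdense : ∀ a b : ℝ, 0 < a → a < b → ∃ s ∈ S, a < s ∧ s < b)
    (E : Set (Fin 2 → S)) :
    (∃ p ∈ JZeroV S 2, E ∈ p) ↔ JSetNearZeroS S 2 E := by
  constructor
  · rintro ⟨p, ⟨-, hpJ⟩, hEp⟩
    exact hpJ E hEp
  · intro hJ
    classical
    set 𝒮 : Set (Set (Fin 2 → S)) :=
      ({E} ∪ {A | ∃ ε : ℝ, 0 < ε ∧ A = JAux.small S 2 ε}) ∪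
        {A | ∃ B, ¬ JSetNearZeroS S 2 B ∧ A = Bᶜ} with h𝒮
    have key : ∀ t : Set (Set (Fin 2 → S)), t.Finite → t ⊆ 𝒮 →
        ∃ ε : ℝ, 0 < ε ∧ ∃ 𝔅 : Finset (Set (Fin 2 → S)),
          (∀ B ∈ 𝔅, ¬ JSetNearZeroS S 2 B) ∧
          E ∩ JAux.small S 2 ε ∩ (⋃ B ∈ 𝔅, B)ᶜ ⊆ ⋂₀ t := by
      intro t htf
      refine Set.Finite.induction_on
        (motive := fun t _ => t ⊆ 𝒮 → ∃ ε : ℝ, 0 < ε ∧ ∃ 𝔅 : Finset (Set (Fin 2 → S)),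
          (∀ B ∈ 𝔅, ¬ JSetNearZeroS S 2 B) ∧
          E ∩ JAux.small S 2 ε ∩ (⋃ B ∈ 𝔅, B)ᶜ ⊆ ⋂₀ t) t htf ?_ ?_
      · intro _
        exact ⟨1, one_pos, ∅, by simp, by simp⟩
      · intro X s ha hsf ih hsub
        obtain ⟨ε, hε, 𝔅, h𝔅, hss⟩ := ih (fun x hx => hsub (Set.mem_insert_of_mem _ hx))
        have hmem : X ∈ 𝒮 := hsub (Set.mem_insert _ _)
        rw [h𝒮] at hmem
        simp only [Set.mem_union, Set.mem_singleton_iff, Set.mem_setOf_eq] at hmem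
        rcases hmem with (rfl | ⟨ε', hε', rfl⟩) | ⟨B, hB, rfl⟩
        · -- X = E
          refine ⟨ε, hε, 𝔅, h𝔅, ?_⟩
          intro x hx
          rw [Set.sInter_insert]
          exact ⟨hx.1.1, hss hx⟩
        · -- X = small ε'
          refine ⟨min ε ε', lt_min hε hε', 𝔅, h𝔅, ?_⟩
          intro x hx
          rw [Set.sInter_insert]
          have hx1 : x ∈ JAux.small S 2 ε :=
            fun i => ⟨(hx.1.2 i).1, lt_of_lt_of_le (hx.1.2 i).2 (min_le_left _ _)⟩
          have hx2 : x ∈ JAux.small S 2 ε' :=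
            fun i => ⟨(hx.1.2 i).1, lt_of_lt_of_le (hx.1.2 i).2 (min_le_right _ _)⟩
          exact ⟨hx2, hss ⟨⟨hx.1.1, hx1⟩, hx.2⟩⟩
        · -- X = Bᶜ
          refine ⟨ε, hε, insert B 𝔅, ?_, ?_⟩
          · intro B' hB'
            rcases Finset.mem_insert.mp hB' with rfl | hB'
            · exact hB
            · exact h𝔅 B' hB'
          · intro x hx
            rw [Set.sInter_insert]
            have hxc : x ∈ (⋃ B' ∈ 𝔅, B')ᶜ := by
              intro hxin
              apply hx.2
              simp only [Set.mem_iUnion] at hxin ⊢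
              obtain ⟨B', hB'𝔅, hxB'⟩ := hxin
              exact ⟨B', Finset.mem_insert_of_mem hB'𝔅, hxB'⟩
            have hxB : x ∈ Bᶜ := by
              intro hxB
              apply hx.2
              simp only [Set.mem_iUnion]
              exact ⟨B, Finset.mem_insert_self _ _, hxB⟩
            exact ⟨hxB, hss ⟨hx.1, hxc⟩⟩
    have hfip : ∀ t ⊆ 𝒮, t.Finite → (⋂₀ t).Nonempty := by
      intro t hts htf
      obtain ⟨ε, hε, 𝔅, h𝔅, hss⟩ := key t htf hts
      have hJ2 := JAux.jset_inter_small hpos hJ hε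
      have hne : (E ∩ JAux.small S 2 ε ∩ (⋃ B ∈ 𝔅, B)ᶜ).Nonempty := by
        rcases Set.eq_empty_or_nonempty (E ∩ JAux.small S 2 ε ∩ (⋃ B ∈ 𝔅, B)ᶜ) with h | h
        · exfalso
          have hcov : E ∩ JAux.small S 2 ε ⊆ ⋃ B ∈ 𝔅, B := by
            intro x hx
            by_contra hx2
            have hmem : x ∈ E ∩ JAux.small S 2 ε ∩ (⋃ B ∈ 𝔅, B)ᶜ := ⟨hx, hx2⟩
            rw [h] at hmem
            exact hmem
          obtain ⟨B, hB𝔅, hBJ⟩ := JAux.jset_partition hpos hdense hJ2 𝔅 hcov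
          exact h𝔅 B hB𝔅 hBJ
        · exact h
      exact hne.mono hss
    haveI hgen : (Filter.generate 𝒮).NeBot := Filter.generate_neBot_iff.mpr hfip
    set p : Ultrafilter (Fin 2 → S) := Ultrafilter.of (Filter.generate 𝒮) with hp
    have hle : (p : Filter (Fin 2 → S)) ≤ Filter.generate 𝒮 := Ultrafilter.of_le _
    have hmemp : ∀ X ∈ 𝒮, X ∈ p := fun X hX => hle (Filter.mem_generate_of_mem hX)
    refine ⟨p, ⟨?_, ?_⟩, ?_⟩
    · intro ε hε
      exact hmemp _ (Set.mem_union_left _ (Set.mem_union_right _ ⟨ε, hε, rfl⟩))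
    · intro A hA
      by_contra hAJ
      have hc : Aᶜ ∈ p := hmemp _ (Set.mem_union_right _ ⟨A, hAJ, rfl⟩)
      exact (Ultrafilter.compl_mem_iff_notMem.mp hc) hA
    · exact hmemp E (Set.mem_union_left _ (Set.mem_union_left _ rfl))
end

section
/- Let C ⊆ ℝ⁺ be a J-set near zero. Then for every finite set F of real sequences converging to 0 (whose terms may be negative) and every δ > 0, there exist a ∈ (0,δ) and a finite nonempty H ⊆ ℕ such that for each f ∈ F, a + Σ_{t∈H} f(t) ∈ C. -/
open Filter Set

attribute [local instance] Ultrafilter.add Ultrafilter.addSemigroup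

/-- The finite sums `FS((b(n))ₙ) = {∑_{n∈H} b(n) : H ⊆ ℕ finite nonempty}`. -/
def FS {α : Type*} [AddCommMonoid α] (b : ℕ → α) : Set α :=
  {y | ∃ H : Finset ℕ, H.Nonempty ∧ y = ∑ t ∈ H, b t}

/-- `C ⊆ ℝ⁺` is a J-set near zero: for every finite set of positive sequences converging to `0`
and every `δ > 0`, there exist `a ∈ (0,δ)` and a finite nonempty `H ⊆ ℕ` with
`a + ∑_{t∈H} f(t) ∈ C` for every `f` in the family. -/
def JSetNearZero (C : Set ℝ) : Prop :=
  ∀ F : Finset (ℕ → ℝ),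
    (∀ f ∈ F, (∀ n, 0 < f n) ∧ Tendsto f atTop (nhds 0)) →
    ∀ δ : ℝ, 0 < δ →
      ∃ a ∈ Set.Ioo (0:ℝ) δ, ∃ H : Finset ℕ, H.Nonempty ∧
        ∀ f ∈ F, a + ∑ t ∈ H, f t ∈ C

/-- `E ⊆ (ℝ⁺)ᵛ` is a J-set near zero. -/
def JSetNearZeroV (v : ℕ) (E : Set (Fin v → ℝ)) : Prop :=
  ∀ F : Finset (ℕ → Fin v → ℝ),
    (∀ f ∈ F, (∀ n i, 0 < f n i) ∧ ∀ i, Tendsto (fun n => f n i) atTop (nhds 0)) →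
    ∀ δ : ℝ, 0 < δ →
      ∃ a : Fin v → ℝ, (∀ i, a i ∈ Set.Ioo (0:ℝ) δ) ∧ ∃ H : Finset ℕ, H.Nonempty ∧
        ∀ f ∈ F, a + ∑ t ∈ H, f t ∈ E

/-- `C ⊆ ℝ⁺` is a C-set near zero: `C` belongs to some idempotent ultrafilter `p ∈ 0⁺(ℝ⁺)` all
of whose members are J-sets near zero (i.e. `p ∈ J₀(ℝ⁺)`). -/
def CSetNearZero (C : Set ℝ) : Prop :=
  ∃ p : Ultrafilter ℝ, p + p = p ∧ (∀ ε : ℝ, 0 < ε → Set.Ioo 0 ε ∈ p) ∧ C ∈ p ∧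
    ∀ A ∈ p, JSetNearZero A

/-- `E ⊆ (ℝ⁺)ᵛ` is a C-set near zero: there is an idempotent in `cl(E) ∩ J₀((ℝ⁺)ᵛ)`. -/
def CSetNearZeroV (v : ℕ) (E : Set (Fin v → ℝ)) : Prop :=
  ∃ p : Ultrafilter (Fin v → ℝ), p + p = p ∧
    (∀ ε : ℝ, 0 < ε → {x : Fin v → ℝ | ∀ i, 0 < x i ∧ x i < ε} ∈ p) ∧ E ∈ p ∧
    ∀ A ∈ p, JSetNearZeroV v A

/-- `U ⊆ (ℝ⁺)ᵈ` is a weak IP-set near zero: it contains `FS` of a sequence in `(ℝ⁺)ᵈ`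
converging to zero. -/
def WeakIPNearZero (d : ℕ) (U : Set (Fin d → ℝ)) : Prop :=
  ∃ b : ℕ → Fin d → ℝ, (∀ n i, 0 < b n i) ∧
    (∀ i, Tendsto (fun n => b n i) atTop (nhds 0)) ∧ FS b ⊆ U

/-- `M` is image partition regular over `ℝ⁺`: for every finite coloring of `ℝ⁺` there is
`x ∈ (ℝ⁺)ᵛ` with all entries of `Mx` in `ℝ⁺` and monochromatic. -/
def IPR (u v : ℕ) (M : Matrix (Fin u) (Fin v) ℝ) : Prop :=
  ∀ r : ℕ, 0 < r → ∀ c : ℝ → Fin r,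
    ∃ x : Fin v → ℝ, (∀ j, 0 < x j) ∧ (∀ i, 0 < M.mulVec x i) ∧
      ∃ k : Fin r, ∀ i, c (M.mulVec x i) = k

/-- `M` is image partition regular over `ℝ⁺` near zero: for every finite coloring of `ℝ⁺` and
every `δ > 0` there is `x ∈ (ℝ⁺)ᵛ` with the entries of `Mx` monochromatic and in `(0,δ)`. -/
def IPRNearZero (u v : ℕ) (M : Matrix (Fin u) (Fin v) ℝ) : Prop :=
  ∀ r : ℕ, 0 < r → ∀ c : ℝ → Fin r, ∀ δ : ℝ, 0 < δ →
    ∃ x : Fin v → ℝ, (∀ j, 0 < x j) ∧ (∀ i, M.mulVec x i ∈ Set.Ioo 0 δ) ∧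
      ∃ k : Fin r, ∀ i, c (M.mulVec x i) = k

/-- `B` is a first entries matrix: no row is zero, the first nonzero entry of each row is
positive, and first nonzero entries occurring in the same column are equal. -/
def FirstEntriesMatrix {u m : ℕ} (B : Matrix (Fin u) (Fin m) ℝ) : Prop :=
  (∀ i, ∃ j, B i j ≠ 0) ∧
  (∀ i j, (∀ k, k < j → B i k = 0) → B i j ≠ 0 → 0 < B i j) ∧
  (∀ i i' j, (∀ k, k < j → B i k = 0) → (∀ k, k < j → B i' k = 0) →
    B i j ≠ 0 → B i' j ≠ 0 → B i j = B i' j)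

/-!
Choose positive `c` with `∑ c ≤ δ / 2`, and a subsequence `φ` along which every `f ∈ F` satisfies
`|f (φ k)| < c k`. The sequences `k ↦ f (φ k) + c k` are then positive and tend to `0`, so the
J-set property yields `a' < δ / 2` and `K`; the shift `∑_{k ∈ K} c k ≤ δ / 2` is absorbed into
`a = a' + ∑_{k ∈ K} c k < δ`, and `H = φ '' K`.
-/

lemma exists_strictMono_forall_norm_lt {E : Type*} [SeminormedAddCommGroup E]
    (F : Finset (ℕ → E)) (hF : ∀ f ∈ F, Tendsto f atTop (nhds 0)) {c : ℕ → ℝ}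
    (hc : ∀ k, 0 < c k) : ∃ φ : ℕ → ℕ, StrictMono φ ∧ ∀ k, ∀ f ∈ F, ‖f (φ k)‖ < c k :=
  extraction_forall_of_eventually fun k => (eventually_all_finset F).2 fun f hf => by
    simpa using (hF f hf).eventually (Metric.ball_mem_nhds 0 (hc k))

lemma add_sum_comp_add_eq_add_sum_image {ι M : Type*} [DecidableEq ι] [AddCommMonoid M]
    (f : ι → M) (c : ℕ → M) {φ : ℕ → ι} (hφ : φ.Injective) (a : M) (K : Finset ℕ) :
    a + ∑ k ∈ K, (f (φ k) + c k) = (a + ∑ k ∈ K, c k) + ∑ t ∈ K.image φ, f t := by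
  rw [Finset.sum_image fun x _ y _ h => hφ h, Finset.sum_add_distrib]
  abel

theorem jSetNearZero_real_sequences_general (C : Set ℝ)
    (hJ : JSetNearZero C) :
    ∀ F : Finset (ℕ → ℝ), (∀ f ∈ F, Tendsto f atTop (nhds 0)) →
      ∀ δ : ℝ, 0 < δ →
        ∃ a ∈ Set.Ioo (0:ℝ) δ, ∃ H : Finset ℕ, H.Nonempty ∧
          ∀ f ∈ F, a + ∑ t ∈ H, f t ∈ C := by
  classical
  intro F hF δ hδ
  obtain ⟨c, hc_pos, s, hcs, hsδ⟩ := posSumOfEncodable (half_pos hδ) ℕ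
  obtain ⟨φ, hφ, hφc⟩ := exists_strictMono_forall_norm_lt F hF hc_pos
  let shift : (ℕ → ℝ) → ℕ → ℝ := fun f k => f (φ k) + c k
  have hshift : ∀ g ∈ F.image shift, (∀ k, 0 < g k) ∧ Tendsto g atTop (nhds 0) := by
    simp only [Finset.mem_image, forall_exists_index, and_imp]
    rintro _ f hf rfl
    refine ⟨fun k => ?_, ?_⟩
    · show 0 < f (φ k) + c k
      linarith [(abs_lt.1 (hφc k f hf)).1]
    · simpa using ((hF f hf).comp hφ.tendsto_atTop).add hcs.summable.tendsto_atTop_zero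
  obtain ⟨a', ha', K, hK, hmem⟩ := hJ (F.image shift) hshift (δ / 2) (half_pos hδ)
  have hcK : ∑ k ∈ K, c k ≤ δ / 2 := (sum_le_hasSum K (fun k _ => (hc_pos k).le) hcs).trans hsδ
  refine ⟨a' + ∑ k ∈ K, c k, ⟨?_, ?_⟩, K.image φ, hK.image φ, fun f hf => ?_⟩
  · linarith [ha'.1, Finset.sum_nonneg fun k (_ : k ∈ K) => (hc_pos k).le]
  · linarith [ha'.2]
  · rw [← add_sum_comp_add_eq_add_sum_image f c hφ.injective]
    exact hmem (shift f) (Finset.mem_image_of_mem shift hf)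

/-- Lemma 3.2: if `C ⊆ ℝ⁺` is a J-set near zero then the J-set condition holds
even for finite families of real sequences (possibly with negative terms) converging to `0`. -/
theorem jSetNearZero_real_sequences (C : Set ℝ) (hC : C ⊆ Set.Ioi 0)
    (hJ : JSetNearZero C) :
    ∀ F : Finset (ℕ → ℝ), (∀ f ∈ F, Tendsto f atTop (nhds 0)) →
      ∀ δ : ℝ, 0 < δ →
        ∃ a ∈ Set.Ioo (0:ℝ) δ, ∃ H : Finset ℕ, H.Nonempty ∧
          ∀ f ∈ F, a + ∑ t ∈ H, f t ∈ C :=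
  jSetNearZero_real_sequences_general C hJ
end

section
/- Let u, v, d ∈ ℕ, let M be a u × v real matrix, and let B be a u × d real matrix. Suppose that for every δ > 0, every C-set near zero C in ℝ⁺, and every sequence (b(n)) in (ℝ⁺)ᵈ converging to 0, there exist x ∈ (0,δ)ᵛ and y ∈ FS((b(n))ₙ) with all entries of Mx + By in C. Then for every δ > 0, every C-set near zero C in ℝ⁺, and every sequence (b(n)) in (ℝ⁺)ᵈ converging to 0, there exist a sequence (x(n)) in (0,δ)ᵛ converging to 0 and a sequence (Hₙ) of finite nonempty subsets of ℕ with max Hₙ < min Hₙ₊₁ for all n, such that FS((M x(n) + B Σ_{t∈Hₙ} b(t))ₙ) ⊆ Cᵘ. -/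
open Filter Set

attribute [local instance] Ultrafilter.add Ultrafilter.addSemigroup

/-- The Galvin–Glazer star set of `A` with respect to `p`. -/
def starSet (p : Ultrafilter ℝ) (A : Set ℝ) : Set ℝ :=
  {a | a ∈ A ∧ {c | a + c ∈ A} ∈ p}

theorem starSet_subset (p : Ultrafilter ℝ) (A : Set ℝ) : starSet p A ⊆ A :=
  fun _ h => h.1

theorem starSet_mem (p : Ultrafilter ℝ) (hp : p + p = p) {A : Set ℝ} (hA : A ∈ p) :
    starSet p A ∈ p := by
  have h2 : A ∈ p + p := by rw [hp]; exact hA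
  have h3 : {a | {c | a + c ∈ A} ∈ p} ∈ p := h2
  exact inter_mem hA h3

theorem starSet_shift (p : Ultrafilter ℝ) (hp : p + p = p) {A : Set ℝ}
    {a : ℝ} (ha : a ∈ starSet p A) : {c | a + c ∈ starSet p A} ∈ p := by
  have h1 : {c | a + c ∈ A} ∈ p := ha.2
  have h2 : {c | a + c ∈ A} ∈ p + p := by rw [hp]; exact h1
  have h3 : {c | {e | a + (c + e) ∈ A} ∈ p} ∈ p := h2
  filter_upwards [h1, h3] with c hc1 hc3
  refine ⟨hc1, ?_⟩
  convert hc3 using 2 with e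
  simp [add_assoc]

/-- Lemma 3.9. -/
theorem lemma_iterated_selection (u v d : ℕ)
    (M : Matrix (Fin u) (Fin v) ℝ) (B : Matrix (Fin u) (Fin d) ℝ)
    (hyp : ∀ δ : ℝ, 0 < δ → ∀ C : Set ℝ, C ⊆ Set.Ioi 0 → CSetNearZero C →
      ∀ b : ℕ → Fin d → ℝ, (∀ n i, 0 < b n i) →
        (∀ i, Tendsto (fun n => b n i) atTop (nhds 0)) →
        ∃ x : Fin v → ℝ, (∀ j, x j ∈ Set.Ioo (0:ℝ) δ) ∧
          ∃ y ∈ FS b, ∀ i, M.mulVec x i + B.mulVec y i ∈ C) :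
    ∀ δ : ℝ, 0 < δ → ∀ C : Set ℝ, C ⊆ Set.Ioi 0 → CSetNearZero C →
      ∀ b : ℕ → Fin d → ℝ, (∀ n i, 0 < b n i) →
        (∀ i, Tendsto (fun n => b n i) atTop (nhds 0)) →
        ∃ x : ℕ → Fin v → ℝ, (∀ n j, x n j ∈ Set.Ioo (0:ℝ) δ) ∧
          (∀ j, Tendsto (fun n => x n j) atTop (nhds 0)) ∧
          ∃ H : ℕ → Finset ℕ, (∀ n, (H n).Nonempty) ∧
            (∀ n, ∀ s ∈ H n, ∀ t ∈ H (n + 1), s < t) ∧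
            FS (fun n => M.mulVec (x n) + B.mulVec (∑ t ∈ H n, b t)) ⊆
              {z : Fin u → ℝ | ∀ i, z i ∈ C} := by
  intro δ hδ C hC hCset b hb hbt
  obtain ⟨p, hp, h0, hCp, hJ⟩ := hCset
  have key : ∀ s : {s : Set ℝ × ℕ // s.1 ∈ p ∧ s.1 ⊆ C}, ∀ n : ℕ,
      ∃ (xx : Fin v → ℝ) (H : Finset ℕ) (s' : {s : Set ℝ × ℕ // s.1 ∈ p ∧ s.1 ⊆ C}),
        (∀ j, xx j ∈ Set.Ioo (0:ℝ) (δ / 2 ^ (n+1))) ∧ H.Nonempty ∧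
        (∀ t ∈ H, s.1.2 ≤ t ∧ t < s'.1.2) ∧ s'.1.1 ⊆ s.1.1 ∧
        (∀ i, (M.mulVec xx + B.mulVec (∑ t ∈ H, b t)) i ∈ starSet p s.1.1) ∧
        (∀ c ∈ s'.1.1, ∀ i,
          (M.mulVec xx + B.mulVec (∑ t ∈ H, b t)) i + c ∈ starSet p s.1.1) := by
    rintro ⟨⟨D, N⟩, hDp, hDC⟩ n
    have hδn : 0 < δ / 2 ^ (n+1) := by positivity
    have hstar_mem : starSet p D ∈ p := starSet_mem p hp hDp
    have hstar_sub : starSet p D ⊆ Set.Ioi 0 :=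
      (starSet_subset p D).trans (hDC.trans hC)
    obtain ⟨xx, hxx, y, ⟨H', hH'ne, rfl⟩, hz⟩ :=
      hyp (δ / 2 ^ (n+1)) hδn (starSet p D) hstar_sub ⟨p, hp, h0, hstar_mem, hJ⟩
        (fun m => b (m + N)) (fun m i => hb _ i)
        (fun i => (hbt i).comp (tendsto_add_atTop_nat N))
    set H : Finset ℕ := H'.image (· + N) with hH
    have hsum : ∑ t ∈ H, b t = ∑ t ∈ H', b (t + N) :=
      Finset.sum_image (by intro a _ a' _ h; dsimp only at h; omega)
    have hzz : ∀ i, (M.mulVec xx + B.mulVec (∑ t ∈ H, b t)) i ∈ starSet p D := by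
      intro i
      have heq : (M.mulVec xx + B.mulVec (∑ t ∈ H, b t)) i
          = M.mulVec xx i + B.mulVec (∑ t ∈ H', (fun m => b (m + N)) t) i := by
        rw [Pi.add_apply, hsum]
      rw [heq]; exact hz i
    set D' : Set ℝ := starSet p D ∩
      ⋂ i, {c | (M.mulVec xx + B.mulVec (∑ t ∈ H, b t)) i + c ∈ starSet p D} with hD'
    have hD'p : D' ∈ p :=
      inter_mem hstar_mem (iInter_mem.2 fun i => starSet_shift p hp (hzz i))
    have hD'sub : D' ⊆ D := Set.inter_subset_left.trans (starSet_subset p D)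
    refine ⟨xx, H, ⟨⟨D', H.sup id + 1⟩, hD'p, hD'sub.trans hDC⟩, hxx,
      hH'ne.image _, ?_, hD'sub, hzz, ?_⟩
    · intro t ht
      obtain ⟨a, _, rfl⟩ := Finset.mem_image.1 ht
      exact ⟨Nat.le_add_left _ _, Nat.lt_succ_of_le (Finset.le_sup (f := id) ht)⟩
    · intro c hc i
      exact Set.mem_iInter.1 hc.2 i
  choose xF HF sF hx hne hbd hsub hstar hshift using key
  set st : ℕ → {s : Set ℝ × ℕ // s.1 ∈ p ∧ s.1 ⊆ C} :=
    fun n => Nat.rec ⟨(C, 0), hCp, Set.Subset.rfl⟩ (fun n s => sF s n) n with hstdef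
  set x : ℕ → Fin v → ℝ := fun n => xF (st n) n with hxdef
  set Hs : ℕ → Finset ℕ := fun n => HF (st n) n with hHdef
  set z : ℕ → Fin u → ℝ :=
    fun n => M.mulVec (x n) + B.mulVec (∑ t ∈ Hs n, b t) with hzdef
  have hmono : ∀ n m, n ≤ m → (st m).1.1 ⊆ (st n).1.1 := by
    intro n m hnm
    induction m, hnm using Nat.le_induction with
    | base => exact subset_rfl
    | succ m hm ih => exact (hsub (st m) m).trans ih
  have claim : ∀ k (F : Finset ℕ) (hF : F.Nonempty), F.card ≤ k → ∀ i,
      (∑ m ∈ F, z m) i ∈ starSet p (st (F.min' hF)).1.1 := by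
    intro k
    induction k with
    | zero =>
      intro F hF hcard
      have := Finset.card_pos.2 hF
      omega
    | succ k ih =>
      intro F hF hcard i
      have hnF : F.min' hF ∈ F := F.min'_mem hF
      set n := F.min' hF with hn
      by_cases hG : (F.erase n).Nonempty
      · have hmF : (F.erase n).min' hG ∈ F :=
          Finset.mem_of_mem_erase ((F.erase n).min'_mem hG)
        have hmn : n + 1 ≤ (F.erase n).min' hG := by
          have h1 : n ≤ (F.erase n).min' hG := F.min'_le _ hmF
          have h2 : (F.erase n).min' hG ≠ n :=
            (Finset.mem_erase.1 ((F.erase n).min'_mem hG)).1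
          omega
        have hcardG : (F.erase n).card ≤ k := by
          have h3 := Finset.card_erase_of_mem hnF
          have h4 := Finset.card_pos.2 hF
          omega
        have hGentry := ih (F.erase n) hG hcardG i
        have hc : (∑ j ∈ F.erase n, z j) i ∈ (st (n+1)).1.1 :=
          hmono (n+1) _ hmn (starSet_subset p _ hGentry)
        have heq : (∑ j ∈ F, z j) i = z n i + (∑ j ∈ F.erase n, z j) i := by
          rw [← Finset.add_sum_erase _ _ hnF]; simp
        rw [heq]
        exact hshift (st n) n _ hc i
      · have hFs : F = {n} := by
          apply Finset.eq_singleton_iff_unique_mem.2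
          refine ⟨hnF, fun a ha => ?_⟩
          by_contra h
          exact hG ⟨a, Finset.mem_erase.2 ⟨h, ha⟩⟩
        rw [hFs, Finset.sum_singleton]
        exact hstar (st n) n i
  refine ⟨x, ?_, ?_, Hs, fun n => hne _ _, ?_, ?_⟩
  · intro n j
    obtain ⟨h1, h2⟩ := hx (st n) n j
    exact ⟨h1, lt_of_lt_of_le h2 (div_le_self hδ.le (one_le_pow₀ (by norm_num)))⟩
  · intro j
    refine tendsto_of_tendsto_of_tendsto_of_le_of_le tendsto_const_nhds
      (Tendsto.div_atTop tendsto_const_nhds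
        ((tendsto_pow_atTop_atTop_of_one_lt one_lt_two).comp (tendsto_add_atTop_nat 1)))
      (fun n => (hx (st n) n j).1.le) (fun n => (hx (st n) n j).2.le)
  · intro n s hs t ht
    have h1 : s < (st (n+1)).1.2 := (hbd (st n) n s hs).2
    have h2 : (st (n+1)).1.2 ≤ t := (hbd (st (n+1)) (n+1) t ht).1
    omega
  · rintro w ⟨F, hF, rfl⟩ i
    have hmem := claim F.card F hF le_rfl i
    exact (st (F.min' hF)).2.2 (starSet_subset p _ hmem)
end

section
/- Let u, v, d ∈ ℕ, let M be a u × v first entries matrix with real entries all of whose first entries are ≥ 1, and suppose M has a constant column (a column with all entries equal to some c > 0). Let C ⊆ ℝ⁺ be such that for every finite set F of real sequences converging to 0 and every δ > 0 there exist m ∈ (0,δ) and finite nonempty H ⊆ ℕ with m + Σ_{t∈H} f(t) ∈ C for all f ∈ F. Then for every u × d real matrix B, every sequence (b(n)) in (ℝ⁺)ᵈ converging to 0, and every δ > 0, there exist x ∈ (0,δ)ᵛ and y ∈ FS((b(n))ₙ) such that all entries of Mx + By lie in C. -/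
/-!
Let `c` be the value of the constant column `j₀`, and let `rᵢ` be the sum of the other entries
of row `i`. Fix a positive null sequence `ε` all of whose finite sums are below `δ`. Applying the
hypothesis on `C` to the null sequences `t ↦ rᵢ ε(t) + (B b(t))ᵢ` with bound `min(δ, cδ)` gives
`m` and `H`; then `x = m/c` in column `j₀` and `x = ∑_{t∈H} ε(t)` elsewhere, with
`y = ∑_{t∈H} b(t)`, make `(Mx + By)ᵢ = m + ∑_{t∈H} (rᵢ ε(t) + (B b(t))ᵢ) ∈ C`.
-/

open Filter Set

attribute [local instance] Ultrafilter.add Ultrafilter.addSemigroup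

/-- Unlike `JSetNearZero`, the sequences need not be positive. -/
def ExtJSetNearZero (C : Set ℝ) : Prop :=
  ∀ F : Finset (ℕ → ℝ), (∀ f ∈ F, Tendsto f atTop (nhds 0)) →
    ∀ δ : ℝ, 0 < δ → ∃ m ∈ Set.Ioo (0:ℝ) δ, ∃ H : Finset ℕ, H.Nonempty ∧
      ∀ f ∈ F, m + ∑ t ∈ H, f t ∈ C

theorem ExtJSetNearZero.exists_add_sum_mem {C : Set ℝ} (hC : ExtJSetNearZero C) {ι : Type*}
    [Fintype ι] (f : ι → ℕ → ℝ) (hf : ∀ i, Tendsto (f i) atTop (nhds 0)) {δ : ℝ} (hδ : 0 < δ) :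
    ∃ m ∈ Set.Ioo (0:ℝ) δ, ∃ H : Finset ℕ, H.Nonempty ∧ ∀ i, m + ∑ t ∈ H, f i t ∈ C := by
  classical
  obtain ⟨m, hm, H, hH, hmem⟩ := hC (Finset.univ.image f) (by simpa using hf) δ hδ
  exact ⟨m, hm, H, hH, fun i => hmem (f i) (Finset.mem_image_of_mem f (Finset.mem_univ i))⟩

theorem exists_pos_tendsto_zero_forall_sum_lt {δ : ℝ} (hδ : 0 < δ) :
    ∃ ε : ℕ → ℝ, (∀ n, 0 < ε n) ∧ Tendsto ε atTop (nhds 0) ∧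
      ∀ H : Finset ℕ, ∑ t ∈ H, ε t < δ := by
  refine ⟨fun n => δ / 2 / 2 / 2 ^ n, fun n => by positivity, ?_, fun H => ?_⟩
  · exact tendsto_const_nhds.div_atTop
      (tendsto_pow_atTop_atTop_of_one_lt (one_lt_two : (1:ℝ) < 2))
  · calc ∑ t ∈ H, δ / 2 / 2 / 2 ^ t ≤ ∑' n : ℕ, δ / 2 / 2 / 2 ^ n :=
          Summable.sum_le_tsum H (fun n _ => by positivity) (summable_geometric_two' _)
      _ < δ := by rw [tsum_geometric_two']; linarith

theorem Matrix.mulVec_update_const_apply {m n R : Type*} [Fintype n] [DecidableEq n]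
    [NonUnitalNonAssocSemiring R] (M : Matrix m n R) (j₀ : n) (a s : R) (i : m) :
    M.mulVec (Function.update (fun _ => s) j₀ a) i =
      M i j₀ * a + (∑ j ∈ Finset.univ.erase j₀, M i j) * s := by
  rw [mulVec, dotProduct, ← Finset.add_sum_erase _ _ (Finset.mem_univ j₀), Function.update_self,
    Finset.sum_mul]
  congr 1
  exact Finset.sum_congr rfl fun j hj => by rw [Function.update_of_ne (Finset.ne_of_mem_erase hj)]

theorem Matrix.tendsto_mulVec_apply_zero {α m n R : Type*} [Fintype n]
    [NonUnitalNonAssocSemiring R] [TopologicalSpace R] [IsTopologicalSemiring R]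
    (B : Matrix m n R) {l : Filter α} {b : α → n → R}
    (hb : ∀ k, Tendsto (fun t => b t k) l (nhds 0)) (i : m) :
    Tendsto (fun t => B.mulVec (b t) i) l (nhds 0) := by
  have hB := ((continuous_const (y := B)).matrix_mulVec continuous_id).tendsto 0
  simpa using tendsto_pi_nhds.1 (hB.comp (tendsto_pi_nhds.2 hb)) i

theorem firstEntries_constant_column_general (u v d : ℕ)
    (M : Matrix (Fin u) (Fin v) ℝ)
    (hconst : ∃ j : Fin v, ∃ c : ℝ, 0 < c ∧ ∀ i, M i j = c)
    (C : Set ℝ)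
    (hCJ : ∀ F : Finset (ℕ → ℝ), (∀ f ∈ F, Tendsto f atTop (nhds 0)) →
      ∀ δ : ℝ, 0 < δ → ∃ m ∈ Set.Ioo (0:ℝ) δ, ∃ H : Finset ℕ, H.Nonempty ∧
        ∀ f ∈ F, m + ∑ t ∈ H, f t ∈ C) :
    ∀ B : Matrix (Fin u) (Fin d) ℝ,
      ∀ b : ℕ → Fin d → ℝ, (∀ n i, 0 < b n i) →
        (∀ i, Tendsto (fun n => b n i) atTop (nhds 0)) →
        ∀ δ : ℝ, 0 < δ →
          ∃ x : Fin v → ℝ, (∀ j, x j ∈ Set.Ioo (0:ℝ) δ) ∧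
            ∃ y ∈ FS b, ∀ i, M.mulVec x i + B.mulVec y i ∈ C := by
  intro B b _ hb δ hδ
  obtain ⟨j₀, c, hc, hcol⟩ := hconst
  obtain ⟨ε, hε_pos, hε, hε_sum⟩ := exists_pos_tendsto_zero_forall_sum_lt hδ
  set r : Fin u → ℝ := fun i => ∑ j ∈ Finset.univ.erase j₀, M i j
  obtain ⟨m, hm, H, hH, hmem⟩ := ExtJSetNearZero.exists_add_sum_mem hCJ
    (fun i t => r i * ε t + B.mulVec (b t) i)
    (fun i => by simpa using (hε.const_mul (r i)).add (B.tendsto_mulVec_apply_zero hb i))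
    (lt_min hδ (mul_pos hc hδ))
  refine ⟨Function.update (fun _ => ∑ t ∈ H, ε t) j₀ (m / c), fun j => ?_,
    ∑ t ∈ H, b t, ⟨H, hH, rfl⟩, fun i => ?_⟩
  · rcases eq_or_ne j j₀ with rfl | hj
    · rw [Function.update_self]
      exact ⟨div_pos hm.1 hc, (div_lt_iff₀ hc).2 (by linarith [hm.2, min_le_right δ (c * δ)])⟩
    · rw [Function.update_of_ne hj]
      exact ⟨Finset.sum_pos (fun t _ => hε_pos t) hH, hε_sum H⟩
  · convert hmem i using 1
    rw [Matrix.mulVec_update_const_apply, hcol, mul_div_cancel₀ _ hc.ne', Matrix.mulVec_sum,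
      Finset.sum_apply, Finset.sum_add_distrib, Finset.mul_sum, add_assoc]

/-- constant-column case of Theorem 3.11 for first entries matrices. -/
theorem firstEntries_constant_column (u v d : ℕ)
    (M : Matrix (Fin u) (Fin v) ℝ) (hFE : FirstEntriesMatrix M)
    (hge1 : ∀ i j, (∀ k, k < j → M i k = 0) → M i j ≠ 0 → 1 ≤ M i j)
    (hconst : ∃ j : Fin v, ∃ c : ℝ, 0 < c ∧ ∀ i, M i j = c)
    (C : Set ℝ)
    (hCJ : ∀ F : Finset (ℕ → ℝ), (∀ f ∈ F, Tendsto f atTop (nhds 0)) →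
      ∀ δ : ℝ, 0 < δ → ∃ m ∈ Set.Ioo (0:ℝ) δ, ∃ H : Finset ℕ, H.Nonempty ∧
        ∀ f ∈ F, m + ∑ t ∈ H, f t ∈ C) :
    ∀ B : Matrix (Fin u) (Fin d) ℝ,
      ∀ b : ℕ → Fin d → ℝ, (∀ n i, 0 < b n i) →
        (∀ i, Tendsto (fun n => b n i) atTop (nhds 0)) →
        ∀ δ : ℝ, 0 < δ →
          ∃ x : Fin v → ℝ, (∀ j, x j ∈ Set.Ioo (0:ℝ) δ) ∧
            ∃ y ∈ FS b, ∀ i, M.mulVec x i + B.mulVec y i ∈ C :=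
  firstEntries_constant_column_general u v d M hconst C hCJ
end

section
/- Let S be a dense subsemigroup of ((0,∞),+) and v > 1. Then J₀(Sᵛ) = {p ∈ 0⁺(Sᵛ) : every member of p is a J-set near zero in Sᵛ} is a compact two-sided ideal of the compact right topological semigroup 0⁺(Sᵛ). -/
open Filter Set

attribute [local instance] Ultrafilter.add Ultrafilter.addSemigroup

/-- `((0,ε) ∩ S)ᵛ` as a set. -/
private def Eset (S : AddSubsemigroup ℝ) (v : ℕ) (ε : ℝ) : Set (Fin v → S) :=
  {x : Fin v → S | ∀ i, 0 < (x i : ℝ) ∧ (x i : ℝ) < ε}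

private lemma mem_add_ultra {X : Type*} [Add X] (p q : Ultrafilter X) (A : Set X) :
    A ∈ p + q ↔ {x | {y | x + y ∈ A} ∈ q} ∈ p := Iff.rfl

private lemma addS_sum_mem (S : AddSubsemigroup ℝ) {ι : Type*} (T : Finset ι) (g : ι → ℝ)
    (hg : ∀ i ∈ T, g i ∈ S) {x : ℝ} (hx : x ∈ S) : x + ∑ i ∈ T, g i ∈ S := by
  classical
  induction T using Finset.cons_induction with
  | empty => simpa using hx
  | cons a T ha ih =>
    rw [Finset.sum_cons, show x + (g a + ∑ i ∈ T, g i) = (x + ∑ i ∈ T, g i) + g a by ring]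
    exact add_mem (ih (fun i hi => hg i (Finset.mem_cons_of_mem hi)))
      (hg a (Finset.mem_cons_self a T))
private lemma key_witness (S : AddSubsemigroup ℝ)
    (hpos : ∀ x ∈ S, (0:ℝ) < x)
    (hdense : ∀ a b : ℝ, 0 < a → a < b → ∃ s ∈ S, a < s ∧ s < b)
    (v : ℕ) (𝒜 : Finset (Set (Fin v → S))) (ε : ℝ) (hε : 0 < ε)
    (hcov : Eset S v ε ⊆ ⋃ A ∈ 𝒜, A)
    (F : Finset (ℕ → Fin v → S))
    (hF : ∀ f ∈ F, ∀ i : Fin v, Tendsto (fun n => ((f n i : ℝ))) atTop (nhds 0))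
    (δ : ℝ) (hδ : 0 < δ) :
    ∃ A ∈ 𝒜, ∃ a : Fin v → S, (∀ i, 0 < (a i : ℝ) ∧ (a i : ℝ) < δ) ∧
      ∃ H : Finset ℕ, H.Nonempty ∧
        ∀ f ∈ F, ∃ e ∈ A, ∀ i, (e i : ℝ) = (a i : ℝ) + ∑ t ∈ H, ((f t i : ℝ)) := by
  classical
  obtain ⟨ι, hι, hHJ⟩ :=
    Combinatorics.Line.exists_mono_in_high_dimension {f // f ∈ F} {A // A ∈ 𝒜}
  set N : ℕ := Fintype.card ι with hN
  have hmin : 0 < min δ ε := lt_min hδ hε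
  set η : ℝ := min δ ε / (2 * (N + 1)) with hη
  have hη0 : 0 < η := by positivity
  have hηsum : ((N : ℝ) + 1) * η = min δ ε / 2 := by
    rw [hη]; field_simp
  -- the index bound M
  have hev : ∀ᶠ n in atTop, ∀ f ∈ F, ∀ i : Fin v, ((f n i : ℝ)) < η := by
    rw [eventually_all_finset]
    intro f hf
    rw [eventually_all]
    exact fun i => (hF f hf i).eventually_lt_const hη0
  obtain ⟨M, hM⟩ := Filter.eventually_atTop.1 hev
  -- a small element of S
  obtain ⟨s, hsS, hs1, hs2⟩ := hdense (η / 2) η (by positivity) (by linarith)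
  have hs0 : 0 < s := lt_trans (by positivity) hs1
  -- index embedding
  set eqv := Fintype.equivFin ι with heqv
  set idx : ι → ℕ := fun i => M + (eqv i : ℕ) with hidx
  have hidxinj : Function.Injective idx := by
    intro i j h
    exact eqv.injective (Fin.ext (Nat.add_left_cancel h))
  have hidxge : ∀ i, M ≤ idx i := fun i => Nat.le_add_right _ _
  -- the points of the cube
  have hmem : ∀ (w : ι → {f // f ∈ F}) (j : Fin v),
      (s + ∑ i : ι, (((w i).1 (idx i) j : ℝ))) ∈ (S : AddSubsemigroup ℝ) :=
    fun w j => addS_sum_mem S Finset.univ _ (fun i _ => ((w i).1 (idx i) j).2) hsS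
  set Y : (ι → {f // f ∈ F}) → (Fin v → S) := fun w j => ⟨_, hmem w j⟩ with hY
  have hsumle : ∀ (w : ι → {f // f ∈ F}) (j : Fin v),
      ∑ i : ι, (((w i).1 (idx i) j : ℝ)) ≤ (N : ℝ) * η := by
    intro w j
    calc ∑ i : ι, (((w i).1 (idx i) j : ℝ)) ≤ ∑ _i : ι, η :=
          Finset.sum_le_sum fun i _ =>
            le_of_lt (hM (idx i) (hidxge i) ((w i).1) (w i).2 j)
      _ = (N : ℝ) * η := by simp [hN, mul_comm]
  have hYE : ∀ w, Y w ∈ Eset S v ε := by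
    intro w j
    constructor
    · exact hpos _ (hmem w j)
    · have h1 := hsumle w j
      have : s + ∑ i : ι, (((w i).1 (idx i) j : ℝ)) < η + (N : ℝ) * η := by linarith
      have h2 : η + (N : ℝ) * η = min δ ε / 2 := by rw [← hηsum]; ring
      calc (Y w j : ℝ) < η + (N:ℝ) * η := this
        _ = min δ ε / 2 := h2
        _ < min δ ε := by linarith
        _ ≤ ε := min_le_right _ _
  have hYcov : ∀ w, ∃ A : {A // A ∈ 𝒜}, Y w ∈ A.1 := by
    intro w
    have := hcov (hYE w)
    rw [Set.mem_iUnion₂] at this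
    obtain ⟨A, hA, hmemA⟩ := this
    exact ⟨⟨A, hA⟩, hmemA⟩
  choose col hcol using hYcov
  obtain ⟨l, c, hc⟩ := hHJ col
  obtain ⟨A₀, hA₀⟩ := c
  have hline : ∀ x : {f // f ∈ F}, Y (l x) ∈ A₀ := by
    intro x
    have h1 := hcol (l x)
    rw [hc x] at h1
    exact h1
  -- the active coordinates
  set Iact : Finset ι := Finset.univ.filter (fun i => l.idxFun i = none) with hIact
  set H : Finset ℕ := Iact.image idx with hH
  have hHne : H.Nonempty := by
    obtain ⟨i, hi⟩ := l.proper
    exact ⟨idx i, Finset.mem_image.2 ⟨i, Finset.mem_filter.2 ⟨Finset.mem_univ i, hi⟩, rfl⟩⟩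
  -- the fixed part
  set fix : Fin v → ℝ := fun j => ∑ i ∈ Iactᶜ, (l.idxFun i).elim 0 (fun b => ((b.1 (idx i) j : ℝ)))
    with hfix
  have hfixterm : ∀ j, ∀ i ∈ Iactᶜ,
      (l.idxFun i).elim 0 (fun b => ((b.1 (idx i) j : ℝ))) ∈ (S : AddSubsemigroup ℝ) ∧
      (l.idxFun i).elim 0 (fun b => ((b.1 (idx i) j : ℝ))) < η := by
    intro j i hi
    rw [Finset.mem_compl, hIact, Finset.mem_filter] at hi
    push_neg at hi
    cases hb : l.idxFun i with
    | none => exact absurd hb (hi (Finset.mem_univ i))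
    | some b =>
      refine ⟨(b.1 (idx i) j).2, ?_⟩
      exact hM (idx i) (hidxge i) b.1 b.2 j
  have hfixmem : ∀ j, s + fix j ∈ (S : AddSubsemigroup ℝ) := fun j =>
    addS_sum_mem S _ _ (fun i hi => (hfixterm j i hi).1) hsS
  have hfixnn : ∀ j, 0 ≤ fix j := fun j =>
    Finset.sum_nonneg fun i hi => le_of_lt (hpos _ (hfixterm j i hi).1)
  have hfixle : ∀ j, fix j ≤ (N : ℝ) * η := by
    intro j
    calc fix j ≤ ∑ _i ∈ Iactᶜ, η := Finset.sum_le_sum fun i hi => le_of_lt (hfixterm j i hi).2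
      _ = (Iactᶜ.card : ℝ) * η := by simp [mul_comm]
      _ ≤ (N : ℝ) * η := by
          have : Iactᶜ.card ≤ N := by
            rw [hN]; exact le_trans (Finset.card_le_univ _) (le_of_eq (Finset.card_univ))
          exact mul_le_mul_of_nonneg_right (by exact_mod_cast this) (le_of_lt hη0)
  set a' : Fin v → S := fun j => ⟨s + fix j, hfixmem j⟩ with ha'
  refine ⟨A₀, hA₀, a', ?_, H, hHne, ?_⟩
  · intro j
    refine ⟨hpos _ (hfixmem j), ?_⟩
    have h1 := hfixle j
    have h2 : ((N : ℝ) + 1) * η = min δ ε / 2 := hηsum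
    calc (a' j : ℝ) = s + fix j := rfl
      _ < η + (N : ℝ) * η := by linarith
      _ = min δ ε / 2 := by rw [← h2]; ring
      _ < min δ ε := by linarith
      _ ≤ δ := min_le_left _ _
  · intro f hf
    refine ⟨Y (l ⟨f, hf⟩), hline ⟨f, hf⟩, ?_⟩
    intro j
    have hsplit : ∑ i : ι, (((l ⟨f, hf⟩ i)).1 (idx i) j : ℝ)
        = (∑ i ∈ Iact, (f (idx i) j : ℝ)) + fix j := by
      rw [← Finset.sum_add_sum_compl Iact]
      congr 1
      · apply Finset.sum_congr rfl
        intro i hi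
        rw [hIact, Finset.mem_filter] at hi
        have : (l ⟨f, hf⟩) i = ⟨f, hf⟩ := by
          show (l.idxFun i).getD _ = _
          rw [hi.2]; rfl
        rw [this]
      · apply Finset.sum_congr rfl
        intro i hi
        have h1 := hfixterm j i hi
        rw [Finset.mem_compl, hIact, Finset.mem_filter] at hi
        push_neg at hi
        cases hb : l.idxFun i with
        | none => exact absurd hb (hi (Finset.mem_univ i))
        | some b =>
          show (((l.idxFun i).getD ⟨f, hf⟩ : {f // f ∈ F}).1 (idx i) j : ℝ) = _
          rw [hb]
          simp
    have hHsum : ∑ t ∈ H, (f t j : ℝ) = ∑ i ∈ Iact, (f (idx i) j : ℝ) := by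
      rw [hH]
      exact Finset.sum_image (fun a _ b _ h => hidxinj h)
    calc (Y (l ⟨f, hf⟩) j : ℝ) = s + ∑ i : ι, (((l ⟨f, hf⟩ i)).1 (idx i) j : ℝ) := rfl
      _ = s + ((∑ i ∈ Iact, (f (idx i) j : ℝ)) + fix j) := by rw [hsplit]
      _ = (s + fix j) + ∑ i ∈ Iact, (f (idx i) j : ℝ) := by ring
      _ = (a' j : ℝ) + ∑ t ∈ H, (f t j : ℝ) := by rw [hHsum]

private lemma cover_J (S : AddSubsemigroup ℝ)
    (hpos : ∀ x ∈ S, (0:ℝ) < x)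
    (hdense : ∀ a b : ℝ, 0 < a → a < b → ∃ s ∈ S, a < s ∧ s < b)
    (v : ℕ) (𝒜 : Finset (Set (Fin v → S))) (ε : ℝ) (hε : 0 < ε)
    (hcov : Eset S v ε ⊆ ⋃ A ∈ 𝒜, A) : ∃ A ∈ 𝒜, JSetNearZeroS S v A := by
  classical
  by_contra hno
  push_neg at hno
  obtain ⟨s, hsS, hs1, hs2⟩ := hdense (ε / 2) ε (by positivity) (by linarith)
  have hs0 : 0 < s := lt_trans (by positivity) hs1
  have hx0 : (fun _ : Fin v => (⟨s, hsS⟩ : S)) ∈ Eset S v ε := fun i => ⟨hs0, hs2⟩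
  have h𝒜ne : 𝒜.Nonempty := by
    have := hcov hx0
    rw [Set.mem_iUnion₂] at this
    obtain ⟨A, hA, _⟩ := this
    exact ⟨A, hA⟩
  have hfail : ∀ A : {A // A ∈ 𝒜}, ∃ Fa : Finset (ℕ → Fin v → S),
      (∀ f ∈ Fa, ∀ i : Fin v, Tendsto (fun n => ((f n i : ℝ))) atTop (nhds 0)) ∧
      ∃ δa : ℝ, 0 < δa ∧ ∀ a : Fin v → S, (∀ i, 0 < (a i : ℝ) ∧ (a i : ℝ) < δa) →
        ∀ H : Finset ℕ, H.Nonempty →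
          ∃ f ∈ Fa, ∀ e ∈ A.1, ∃ i, (e i : ℝ) ≠ (a i : ℝ) + ∑ t ∈ H, ((f t i : ℝ)) := by
    intro A
    have h := hno A.1 A.2
    rw [JSetNearZeroS] at h
    push_neg at h
    exact h
  choose Fa hFa δa hδa hfaila using hfail
  set Fs : Finset (ℕ → Fin v → S) := 𝒜.attach.biUnion Fa with hFs
  have hFsconv : ∀ f ∈ Fs, ∀ i : Fin v, Tendsto (fun n => ((f n i : ℝ))) atTop (nhds 0) := by
    intro f hf
    rw [hFs, Finset.mem_biUnion] at hf
    obtain ⟨A, _, hfA⟩ := hf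
    exact hFa A f hfA
  have hattne : 𝒜.attach.Nonempty := by
    obtain ⟨A₁, hA₁⟩ := h𝒜ne
    exact ⟨⟨A₁, hA₁⟩, Finset.mem_attach _ _⟩
  set δs : ℝ := 𝒜.attach.inf' hattne δa with hδs
  have hδs0 : 0 < δs := by
    rw [hδs, Finset.lt_inf'_iff]
    exact fun A _ => hδa A
  obtain ⟨A, hA, a, ha, H, hHne, hwit⟩ :=
    key_witness S hpos hdense v 𝒜 ε hε hcov Fs hFsconv δs hδs0
  have ha' : ∀ i, 0 < (a i : ℝ) ∧ (a i : ℝ) < δa ⟨A, hA⟩ := fun i =>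
    ⟨(ha i).1, lt_of_lt_of_le (ha i).2 (Finset.inf'_le _ (Finset.mem_attach _ ⟨A, hA⟩))⟩
  obtain ⟨f, hfFa, hbad⟩ := hfaila ⟨A, hA⟩ a ha' H hHne
  obtain ⟨e, heA, heq⟩ := hwit f (Finset.mem_biUnion.2 ⟨⟨A, hA⟩, Finset.mem_attach _ _, hfFa⟩)
  obtain ⟨i, hne⟩ := hbad e heA
  exact hne (heq i)

private lemma JZero_nonempty (S : AddSubsemigroup ℝ)
    (hpos : ∀ x ∈ S, (0:ℝ) < x)
    (hdense : ∀ a b : ℝ, 0 < a → a < b → ∃ s ∈ S, a < s ∧ s < b)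
    (v : ℕ) : (JZeroV S v).Nonempty := by
  classical
  set 𝒮 : Set (Set (Fin v → S)) :=
    {B | ∃ ε : ℝ, 0 < ε ∧ B = Eset S v ε} ∪ {B | ¬ JSetNearZeroS S v Bᶜ} with h𝒮
  have cond : ∀ T : Finset (Set (Fin v → S)), (↑T : Set (Set (Fin v → S))) ⊆ 𝒮 →
      (⋂₀ (↑T : Set (Set (Fin v → S)))).Nonempty := by
    intro T hT
    by_contra hemp
    rw [Set.not_nonempty_iff_eq_empty] at hemp
    set g : Set (Fin v → S) → ℝ := fun B =>
      if h : ∃ ε : ℝ, 0 < ε ∧ B = Eset S v ε then h.choose else 1 with hg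
    have hgpos : ∀ B, 0 < g B := by
      intro B
      rw [hg]
      dsimp only
      split
      · next h => exact h.choose_spec.1
      · exact one_pos
    have hgeq : ∀ B, (∃ ε : ℝ, 0 < ε ∧ B = Eset S v ε) → B = Eset S v (g B) := by
      intro B hB
      rw [hg]
      dsimp only
      rw [dif_pos hB]
      exact hB.choose_spec.2
    set ε₀ : ℝ := (insert (1 : ℝ) (T.image g)).min' (Finset.insert_nonempty _ _) with hε₀
    have hε₀pos : 0 < ε₀ := by
      have h := Finset.min'_mem (insert (1 : ℝ) (T.image g)) (Finset.insert_nonempty _ _)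
      rw [← hε₀] at h
      rcases Finset.mem_insert.1 h with h | h
      · rw [h]; exact one_pos
      · obtain ⟨B, _, hB⟩ := Finset.mem_image.1 h
        rw [← hB]; exact hgpos B
    have hε₀le : ∀ B ∈ T, ε₀ ≤ g B := fun B hB =>
      Finset.min'_le _ _ (Finset.mem_insert_of_mem (Finset.mem_image_of_mem g hB))
    set 𝒜 : Finset (Set (Fin v → S)) :=
      (T.filter (fun B => ¬ JSetNearZeroS S v Bᶜ)).image compl with h𝒜
    have hcov : Eset S v ε₀ ⊆ ⋃ A ∈ 𝒜, A := by
      intro x hx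
      by_contra hxn
      have hxT : x ∈ ⋂₀ (↑T : Set (Set (Fin v → S))) := by
        rw [Set.mem_sInter]
        intro B hBT
        rcases hT hBT with hB1 | hB2
        · rw [hgeq B hB1]
          intro i
          exact ⟨(hx i).1, lt_of_lt_of_le (hx i).2 (hε₀le B hBT)⟩
        · by_contra hxB
          apply hxn
          rw [Set.mem_iUnion₂]
          refine ⟨Bᶜ, ?_, hxB⟩
          rw [h𝒜]
          exact Finset.mem_image_of_mem compl (Finset.mem_filter.2 ⟨hBT, hB2⟩)
      rw [hemp] at hxT
      exact hxT
    obtain ⟨A, hA𝒜, hAJ⟩ := cover_J S hpos hdense v 𝒜 ε₀ hε₀pos hcov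
    rw [h𝒜] at hA𝒜
    obtain ⟨B, hBf, hBA⟩ := Finset.mem_image.1 hA𝒜
    have hBnJ := (Finset.mem_filter.1 hBf).2
    rw [hBA] at hBnJ
    exact hBnJ hAJ
  obtain ⟨p, hp⟩ := Ultrafilter.exists_ultrafilter_of_finite_inter_nonempty 𝒮 cond
  refine ⟨p, ?_, ?_⟩
  · intro ε hε
    exact hp (Or.inl ⟨ε, hε, rfl⟩)
  · intro A hAp
    by_contra hnJ
    have hAc : Aᶜ ∈ p := hp (Or.inr (by simpa [compl_compl] using hnJ))
    exact (Ultrafilter.compl_mem_iff_notMem.1 hAc) hAp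

private lemma JZero_isClosed (S : AddSubsemigroup ℝ) (v : ℕ) : IsClosed (JZeroV S v) := by
  have h : JZeroV S v =
      (⋂ (ε : ℝ), ⋂ (_ : 0 < ε), {p : Ultrafilter (Fin v → S) | Eset S v ε ∈ p}) ∩
      ⋂ (A : Set (Fin v → S)), ⋂ (_ : ¬ JSetNearZeroS S v A),
        {p : Ultrafilter (Fin v → S) | A ∈ p}ᶜ := by
    ext p
    simp only [JZeroV, zeroPlusV, Set.mem_inter_iff, Set.mem_iInter, Set.mem_setOf_eq,
      Set.mem_compl_iff]
    constructor
    · rintro ⟨h1, h2⟩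
      exact ⟨h1, fun A hA hAp => hA (h2 A hAp)⟩
    · rintro ⟨h1, h2⟩
      refine ⟨h1, fun A hAp => ?_⟩
      by_contra hnJ
      exact h2 A hnJ hAp
  rw [h]
  exact ((isClosed_iInter fun ε => isClosed_iInter fun _ => ultrafilter_isClosed_basic _).inter
    (isClosed_iInter fun A => isClosed_iInter fun _ => (ultrafilter_isOpen_basic _).isClosed_compl))

private lemma zeroPlus_add (S : AddSubsemigroup ℝ) (v : ℕ)
    {p q : Ultrafilter (Fin v → S)} (hp : p ∈ zeroPlusV S v) (hq : q ∈ zeroPlusV S v) :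
    p + q ∈ zeroPlusV S v := by
  intro ε hε
  rw [show {f : Fin v → S | ∀ i, 0 < (f i : ℝ) ∧ (f i : ℝ) < ε} = Eset S v ε from rfl,
    mem_add_ultra]
  refine Filter.mem_of_superset (hp (ε / 2) (by linarith)) ?_
  intro x hx
  show {y | x + y ∈ Eset S v ε} ∈ q
  refine Filter.mem_of_superset (hq (ε / 2) (by linarith)) ?_
  intro y hy i
  have hxy : ((x + y) i : ℝ) = (x i : ℝ) + (y i : ℝ) := rfl
  rw [Set.mem_setOf_eq] at hx
  constructor
  · rw [hxy]; have := (hx i).1; have := (hy i).1; linarith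
  · rw [hxy]; have := (hx i).2; have := (hy i).2; linarith

private lemma JZero_add_left (S : AddSubsemigroup ℝ) (v : ℕ)
    {p q : Ultrafilter (Fin v → S)} (hp : p ∈ JZeroV S v) (hq : q ∈ zeroPlusV S v) :
    ∀ A ∈ p + q, JSetNearZeroS S v A := by
  classical
  intro A hA F hF δ hδ
  have hB : {x | {y | x + y ∈ A} ∈ q} ∈ p := (mem_add_ultra p q A).1 hA
  obtain ⟨a, ha, H, hHne, hwit⟩ := hp.2 _ hB F hF (δ / 2) (by linarith)
  choose e he heq using hwit
  have hW : (Eset S v (δ / 2) ∩ ⋂ x ∈ F.attach, {y | e x.1 x.2 + y ∈ A}) ∈ q := by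
    refine Filter.inter_mem (hq (δ / 2) (by linarith)) ?_
    refine (Filter.biInter_finset_mem _).2 ?_
    intro x _
    exact he x.1 x.2
  obtain ⟨y, hy1, hy2⟩ := Ultrafilter.nonempty_of_mem hW
  refine ⟨a + y, ?_, H, hHne, ?_⟩
  · intro i
    have h1 := ha i
    have h2 := hy1 i
    have hco : ((a + y) i : ℝ) = (a i : ℝ) + (y i : ℝ) := rfl
    constructor
    · rw [hco]; linarith [h1.1, h2.1]
    · rw [hco]; linarith [h1.2, h2.2]
  · intro f hf
    refine ⟨e f hf + y, ?_, ?_⟩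
    · rw [Set.mem_iInter₂] at hy2
      exact hy2 ⟨f, hf⟩ (Finset.mem_attach _ _)
    · intro i
      have hco : ((e f hf + y) i : ℝ) = (e f hf i : ℝ) + (y i : ℝ) := rfl
      have hco2 : ((a + y) i : ℝ) = (a i : ℝ) + (y i : ℝ) := rfl
      rw [hco, hco2, heq f hf i]
      ring

private lemma JZero_add_right (S : AddSubsemigroup ℝ) (v : ℕ)
    {p q : Ultrafilter (Fin v → S)} (hp : p ∈ JZeroV S v) (hq : q ∈ zeroPlusV S v) :
    ∀ A ∈ q + p, JSetNearZeroS S v A := by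
  intro A hA F hF δ hδ
  have hB : {x | {y | x + y ∈ A} ∈ (p : Ultrafilter (Fin v → S))} ∈ q :=
    (mem_add_ultra q p A).1 hA
  have hW : ({x | {y | x + y ∈ A} ∈ p} ∩ Eset S v (δ / 2)) ∈ q :=
    Filter.inter_mem hB (hq (δ / 2) (by linarith))
  obtain ⟨x, hx1, hx2⟩ := Ultrafilter.nonempty_of_mem hW
  obtain ⟨a, ha, H, hHne, hwit⟩ := hp.2 _ hx1 F hF (δ / 2) (by linarith)
  refine ⟨x + a, ?_, H, hHne, ?_⟩
  · intro i
    have h1 := ha i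
    have h2 := hx2 i
    have hco : ((x + a) i : ℝ) = (x i : ℝ) + (a i : ℝ) := rfl
    constructor
    · rw [hco]; linarith [h1.1, h2.1]
    · rw [hco]; linarith [h1.2, h2.2]
  · intro f hf
    obtain ⟨ef, hef, heq⟩ := hwit f hf
    refine ⟨x + ef, hef, ?_⟩
    intro i
    have hco : ((x + ef) i : ℝ) = (x i : ℝ) + (ef i : ℝ) := rfl
    have hco2 : ((x + a) i : ℝ) = (x i : ℝ) + (a i : ℝ) := rfl
    rw [hco, hco2, heq i]
    ring

/-- for `v > 1`, `J₀(Sᵛ)` is a compact (nonempty) two-sided ideal of the compact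
right topological semigroup `0⁺(Sᵛ)`. -/
theorem JZeroV_isCompact_ideal (S : AddSubsemigroup ℝ)
    (hpos : ∀ x ∈ S, (0:ℝ) < x)
    (hdense : ∀ a b : ℝ, 0 < a → a < b → ∃ s ∈ S, a < s ∧ s < b)
    (v : ℕ) (hv : 1 < v) :
    IsCompact (JZeroV S v) ∧ (JZeroV S v).Nonempty ∧ JZeroV S v ⊆ zeroPlusV S v ∧
      ∀ p ∈ JZeroV S v, ∀ q ∈ zeroPlusV S v, p + q ∈ JZeroV S v ∧ q + p ∈ JZeroV S v := by
  refine ⟨(JZero_isClosed S v).isCompact, JZero_nonempty S hpos hdense v,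
    fun p hp => hp.1, ?_⟩
  intro p hp q hq
  exact ⟨⟨zeroPlus_add S v hp.1 hq, JZero_add_left S v hp hq⟩,
    ⟨zeroPlus_add S v hq hp.1, JZero_add_right S v hp hq⟩⟩
end
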